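/- arXiv:2205.08436 — 5 statements merged into one kernel-verified Lean document; each statement's English description precedes it below -/
import Mathlib

section
/- Let n ≥ 1 and γ ∈ (0,2). There exist t_0 ∈ (0,1/4], real numbers ε > 0, δ > 0, C > 0, and a strictly increasing function ψ : [0,t_0] → ℝ with ψ(0) = 0, twice continuously differentiable on (0,t_0], such that: (1) |ψ(t) − φ_γ(t) − ε·t^{2−α}| ≤ C·t^{2−α+δ} for all t ∈ (0,t_0]; (2) 2ψ''(t) ≥ 4n·ψ'(t) + W_γ'(ψ(t)) for all t ∈ (0,t_0]; (3) ψ(t_0) ≤ 1 and ψ'(t_0) ≤ √(24n). -/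
open MeasureTheory Metric Set Filter
open scoped ENNReal NNReal Topology

noncomputable def Wpot (γ t : ℝ) : ℝ :=
  if 0 < t then ((2 - γ) ^ 2 / 16) * t ^ (-γ) else 0

noncomputable def Wpot' (γ s : ℝ) : ℝ := -(γ * ((2 - γ) ^ 2 / 16) * s ^ (-γ - 1))

noncomputable def cstar (γ : ℝ) : ℝ := ((1 + γ / 2) ^ 2 * ((2 - γ) ^ 2 / 16)) ^ (1 / (γ + 2))

noncomputable def phi1D (γ t : ℝ) : ℝ := cstar γ * max t 0 ^ (2 / (2 + γ))

noncomputable def APenergy (n : ℕ) (γ : ℝ) (u : EuclideanSpace ℝ (Fin n) → ℝ)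
    (Ω : Set (EuclideanSpace ℝ (Fin n))) : ℝ≥0∞ :=
  ∫⁻ x in Ω, ENNReal.ofReal (‖fderiv ℝ u x‖ ^ 2 + Wpot γ (u x))

def MemH1 (n : ℕ) (Ω : Set (EuclideanSpace ℝ (Fin n))) (u : EuclideanSpace ℝ (Fin n) → ℝ) : Prop :=
  MemLp u 2 (volume.restrict Ω) ∧ MemLp (fun x => ‖fderiv ℝ u x‖) 2 (volume.restrict Ω)

def IsMinimizer (n : ℕ) (γ : ℝ) (Ω : Set (EuclideanSpace ℝ (Fin n)))
    (u : EuclideanSpace ℝ (Fin n) → ℝ) : Prop :=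
  (∀ x, 0 ≤ u x) ∧ MemH1 n Ω u ∧ APenergy n γ u Ω < ⊤ ∧
    ∀ v : EuclideanSpace ℝ (Fin n) → ℝ, (∀ x, 0 ≤ v x) → MemH1 n Ω v →
      (∃ K : Set (EuclideanSpace ℝ (Fin n)), IsCompact K ∧ K ⊆ Ω ∧
        ∀ᵐ x ∂volume.restrict Ω, x ∉ K → u x = v x) →
      APenergy n γ u Ω ≤ APenergy n γ v Ω

noncomputable def perim (n : ℕ) (Ω E : Set (EuclideanSpace ℝ (Fin n))) : ℝ≥0∞ :=
  ⨆ (g : EuclideanSpace ℝ (Fin n) → EuclideanSpace ℝ (Fin n))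
    (_ : ContDiff ℝ (⊤ : ℕ∞) g ∧ HasCompactSupport g ∧ tsupport g ⊆ Ω ∧ ∀ x, ‖g x‖ ≤ 1),
    ENNReal.ofReal (∫ x in E, ∑ i, fderiv ℝ g x (EuclideanSpace.single i 1) i)

lemma amgm_aux (q : ℝ) (hq : 0 < q) {a s : ℝ} (ha : 0 < a) (has : a ≤ s) :
    (1 + q) * a ^ (-q) ≤ s ^ (-q) + q * (a ^ (-q - 1) * s) := by
  have hs : 0 < s := lt_of_lt_of_le ha has
  have h1q : (0:ℝ) < 1 + q := by linarith
  have hne : (1 + q) ≠ 0 := ne_of_gt h1q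
  have hw : 1 / (1 + q) + q / (1 + q) = 1 := by field_simp
  have h := Real.geom_mean_le_arith_mean2_weighted
    (w₁ := 1 / (1 + q)) (w₂ := q / (1 + q)) (p₁ := s ^ (-q)) (p₂ := a ^ (-q - 1) * s)
    (by positivity) (by positivity)
    (Real.rpow_nonneg hs.le (-q)) (mul_nonneg (Real.rpow_nonneg ha.le _) hs.le) hw
  have hgeom : (s ^ (-q)) ^ (1 / (1 + q)) * (a ^ (-q - 1) * s) ^ (q / (1 + q)) = a ^ (-q) := by
    rw [Real.mul_rpow (Real.rpow_nonneg ha.le _) hs.le, ← Real.rpow_mul hs.le,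
      ← Real.rpow_mul ha.le]
    calc s ^ (-q * (1 / (1 + q))) * (a ^ ((-q - 1) * (q / (1 + q))) * s ^ (q / (1 + q)))
        = a ^ ((-q - 1) * (q / (1 + q))) * (s ^ (-q * (1 / (1 + q))) * s ^ (q / (1 + q))) := by
          ring
      _ = a ^ ((-q - 1) * (q / (1 + q))) * s ^ (-q * (1 / (1 + q)) + q / (1 + q)) := by
          rw [← Real.rpow_add hs]
      _ = a ^ (-q) * s ^ (0:ℝ) := by
          rw [show (-q - 1) * (q / (1 + q)) = -q by field_simp; ring,
            show -q * (1 / (1 + q)) + q / (1 + q) = 0 by field_simp; ring]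
      _ = a ^ (-q) := by rw [Real.rpow_zero, mul_one]
  rw [hgeom] at h
  have h2 := mul_le_mul_of_nonneg_left h h1q.le
  calc (1 + q) * a ^ (-q)
      ≤ (1 + q) * (1 / (1 + q) * s ^ (-q) + q / (1 + q) * (a ^ (-q - 1) * s)) := h2
    _ = s ^ (-q) + q * (a ^ (-q - 1) * s) := by field_simp

set_option maxHeartbeats 1600000 in
/-- The 1D barrier of Lemma 3.2 (lem1). -/
theorem stmt5 (n : ℕ) (hn : 1 ≤ n) (γ : ℝ) (hγ : γ ∈ Ioo (0:ℝ) 2) :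
    ∃ t₀ ∈ Ioc (0:ℝ) (1/4), ∃ ε : ℝ, 0 < ε ∧ ∃ δ : ℝ, 0 < δ ∧ ∃ C : ℝ, 0 < C ∧
      ∃ ψ : ℝ → ℝ, ψ 0 = 0 ∧ StrictMonoOn ψ (Icc 0 t₀) ∧ ContDiffOn ℝ 2 ψ (Ioc 0 t₀) ∧
        (∀ t ∈ Ioc (0:ℝ) t₀,
          |ψ t - phi1D γ t - ε * t ^ (2 - 2 / (2 + γ))| ≤ C * t ^ (2 - 2 / (2 + γ) + δ)) ∧
        (∀ t ∈ Ioc (0:ℝ) t₀,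
          4 * n * derivWithin ψ (Ioc 0 t₀) t + Wpot' γ (ψ t) ≤
            2 * derivWithin (derivWithin ψ (Ioc 0 t₀)) (Ioc 0 t₀) t) ∧
        ψ t₀ ≤ 1 ∧ derivWithin ψ (Ioc 0 t₀) t₀ ≤ Real.sqrt (24 * n) := by
  obtain ⟨hγ0, hγ2⟩ := hγ
  have h2γ : (0:ℝ) < 2 + γ := by linarith
  have hn1 : (1:ℝ) ≤ (n:ℝ) := by exact_mod_cast hn
  have hn0 : (0:ℝ) < (n:ℝ) := by linarith
  obtain ⟨α, hα⟩ : ∃ α : ℝ, α = 2 / (2 + γ) := ⟨_, rfl⟩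
  have hα2 : α * (2 + γ) = 2 := by rw [hα]; field_simp
  have hα0 : 0 < α := by rw [hα]; positivity
  have hα1 : α < 1 := by rw [hα, div_lt_one h2γ]; linarith
  have hαh : 1/2 < α := by rw [hα, lt_div_iff₀ h2γ]; linarith
  obtain ⟨β, hβ⟩ : ∃ β : ℝ, β = 2 - α := ⟨_, rfl⟩
  have hβ1 : 1 < β := by rw [hβ]; linarith
  have hβ32 : β < 3/2 := by rw [hβ]; linarith
  obtain ⟨X, hXd⟩ : ∃ X : ℝ, X = 2*α - 1 := ⟨_, rfl⟩
  have hX0 : 0 < X := by rw [hXd]; linarith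
  have hX1 : X ≤ 1 := by rw [hXd]; linarith
  obtain ⟨c, hc⟩ : ∃ c : ℝ, c = (2 - γ)^2/16 := ⟨_, rfl⟩
  have hc0 : 0 < c := by rw [hc]; exact div_pos (pow_pos (by linarith) 2) (by norm_num)
  obtain ⟨A, hA⟩ : ∃ A : ℝ, A = cstar γ := ⟨_, rfl⟩
  have hbase : (0:ℝ) < (1 + γ/2)^2 * c := mul_pos (pow_pos (by linarith) 2) hc0
  have hA0 : 0 < A := by
    rw [hA, cstar, ← hc]; exact Real.rpow_pos_of_pos hbase _
  have hApow : A ^ (γ + 2) = (1 + γ/2)^2 * c := by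
    rw [hA, cstar, ← hc, ← Real.rpow_mul hbase.le, one_div,
      inv_mul_cancel₀ (by linarith : γ + 2 ≠ 0), Real.rpow_one]
  have hγsq : γ^2 < 4 := by nlinarith
  have hA34 : A ≤ 3/4 := by
    by_contra hcon
    push_neg at hcon
    have h1 : ((3:ℝ)/4) ^ (γ+2) < A ^ (γ+2) :=
      Real.rpow_lt_rpow (by norm_num) hcon (by linarith)
    have h2 : ((3:ℝ)/4) ^ ((4:ℕ):ℝ) ≤ ((3:ℝ)/4) ^ (γ+2) :=
      Real.rpow_le_rpow_of_exponent_ge (by norm_num) (by norm_num) (by push_cast; linarith)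
    rw [Real.rpow_natCast] at h2
    have h3 : (1 + γ/2)^2 * c ≤ 1/4 := by
      rw [hc, show (1 + γ/2)^2 * ((2-γ)^2/16) = ((4-γ^2)/8)^2 by ring]
      have hu0 : (0:ℝ) ≤ (4-γ^2)/8 := by linarith
      have hu1 : (4-γ^2)/8 ≤ 1/2 := by nlinarith [sq_nonneg γ]
      nlinarith [hu0, hu1]
    have h4 : ((3:ℝ)/4)^(4:ℕ) = 81/256 := by norm_num
    rw [hApow] at h1
    linarith
  obtain ⟨ε, hεd⟩ : ∃ e : ℝ, e = A * α / 60 := ⟨_, rfl⟩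
  have hε0 : 0 < ε := by rw [hεd]; exact div_pos (mul_pos hA0 hα0) (by norm_num)
  have hεA : ε * β ≤ A * α / 40 := by
    have hm := mul_le_mul_of_nonneg_left hβ32.le (mul_pos hA0 hα0).le
    rw [hεd]; rw [div_mul_eq_mul_div]; rw [div_le_div_iff₀ (by norm_num) (by norm_num)]
    nlinarith [hm]
  have hAαεβ : 0 < A * α + ε * β := by
    have := mul_pos hA0 hα0
    have := mul_pos hε0 (lt_trans one_pos hβ1)
    linarith
  obtain ⟨B, hBd⟩ : ∃ B : ℝ, B = 2 * n * (A * α + ε * β) / X := ⟨_, rfl⟩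
  have h2n : (0:ℝ) < 2 * n := by linarith
  have hB0 : 0 < B := by
    rw [hBd]; exact div_pos (mul_pos h2n hAαεβ) hX0
  have hBX : B * X = 2 * n * (A * α + ε * β) := by
    rw [hBd, div_mul_cancel₀ _ hX0.ne']
  have hD0 : (0:ℝ) < 2 * n * (1 + α) := mul_pos h2n (by linarith)
  obtain ⟨t₀, ht₀d⟩ : ∃ t : ℝ, t = min (1/4 : ℝ) (X / (2 * n * (1 + α))) := ⟨_, rfl⟩
  have ht₀0 : 0 < t₀ := by
    rw [ht₀d]; exact lt_min (by norm_num) (div_pos hX0 hD0)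
  have ht₀14 : t₀ ≤ 1/4 := by rw [ht₀d]; exact min_le_left _ _
  have ht₀1 : t₀ ≤ 1 := by linarith
  have ht₀X : 2 * n * (1 + α) * t₀ ≤ X := by
    have h := min_le_right (1/4 : ℝ) (X / (2 * n * (1 + α)))
    rw [← ht₀d] at h
    calc 2 * (n:ℝ) * (1 + α) * t₀ ≤ 2 * n * (1 + α) * (X / (2 * n * (1 + α))) :=
          mul_le_mul_of_nonneg_left h hD0.le
      _ = X := by rw [mul_comm, div_mul_cancel₀ _ hD0.ne']
  have hBt₀ : B * ((1 + α) * t₀) ≤ A * α + ε * β := by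
    have h1 : B * (2 * n * (1 + α) * t₀) ≤ B * X := mul_le_mul_of_nonneg_left ht₀X hB0.le
    rw [hBX] at h1
    refine le_of_mul_le_mul_left ?_ h2n
    linarith [h1]
  obtain ⟨ψ, hψd⟩ : ∃ f : ℝ → ℝ, f = fun t : ℝ =>
      A * t ^ α + ε * t ^ β + B * t ^ (1 + α) := ⟨_, rfl⟩
  obtain ⟨ψ₁, hψ₁d⟩ : ∃ f : ℝ → ℝ, f = fun t : ℝ =>
      A * (α * t ^ (α - 1)) + ε * (β * t ^ (β - 1))
      + B * ((1 + α) * t ^ (1 + α - 1)) := ⟨_, rfl⟩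
  obtain ⟨ψ₂, hψ₂d⟩ : ∃ f : ℝ → ℝ, f = fun t : ℝ =>
      A * (α * ((α - 1) * t ^ (α - 1 - 1))) + ε * (β * ((β - 1) * t ^ (β - 1 - 1)))
      + B * ((1 + α) * ((1 + α - 1) * t ^ (1 + α - 1 - 1))) := ⟨_, rfl⟩
  have hUD : UniqueDiffOn ℝ (Ioc (0:ℝ) t₀) := uniqueDiffOn_Ioc 0 t₀
  have hasD : ∀ t : ℝ, t ≠ 0 → HasDerivAt ψ (ψ₁ t) t := by
    intro t ht
    rw [hψd, hψ₁d]
    exact (((Real.hasDerivAt_rpow_const (p := α) (Or.inl ht)).const_mul A).add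
      ((Real.hasDerivAt_rpow_const (p := β) (Or.inl ht)).const_mul ε)).add
      ((Real.hasDerivAt_rpow_const (p := 1 + α) (Or.inl ht)).const_mul B)
  have hasD1 : ∀ t : ℝ, t ≠ 0 → HasDerivAt ψ₁ (ψ₂ t) t := by
    intro t ht
    rw [hψ₁d, hψ₂d]
    exact ((((Real.hasDerivAt_rpow_const (p := α - 1) (Or.inl ht)).const_mul α).const_mul A).add
      ((((Real.hasDerivAt_rpow_const (p := β - 1) (Or.inl ht)).const_mul β).const_mul ε))).add
      ((((Real.hasDerivAt_rpow_const (p := 1 + α - 1) (Or.inl ht)).const_mul (1+α)).const_mul B))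
  have hd1 : ∀ t ∈ Ioc (0:ℝ) t₀, derivWithin ψ (Ioc 0 t₀) t = ψ₁ t := by
    intro t ht
    exact ((hasD t ht.1.ne').hasDerivWithinAt).derivWithin (hUD t ht)
  have hd2 : ∀ t ∈ Ioc (0:ℝ) t₀,
      derivWithin (derivWithin ψ (Ioc 0 t₀)) (Ioc 0 t₀) t = ψ₂ t := by
    intro t ht
    rw [derivWithin_congr (fun x hx => hd1 x hx) (hd1 t ht)]
    exact ((hasD1 t ht.1.ne').hasDerivWithinAt).derivWithin (hUD t ht)
  refine ⟨t₀, ⟨ht₀0, ht₀14⟩, ε, hε0, X, hX0, B, hB0, ψ, ?_, ?_, ?_, ?_, ?_, ?_, ?_⟩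
  · -- ψ 0 = 0
    rw [hψd]
    simp only
    rw [Real.zero_rpow hα0.ne', Real.zero_rpow (by linarith : β ≠ 0),
      Real.zero_rpow (by linarith : 1 + α ≠ 0)]
    ring
  · -- StrictMonoOn
    intro a ha b hb hab
    have g1 : a ^ α < b ^ α := Real.rpow_lt_rpow ha.1 hab hα0
    have g2 : a ^ β < b ^ β := Real.rpow_lt_rpow ha.1 hab (by linarith)
    have g3 : a ^ (1+α) < b ^ (1+α) := Real.rpow_lt_rpow ha.1 hab (by linarith)
    rw [hψd]
    simp only
    exact add_lt_add (add_lt_add (mul_lt_mul_of_pos_left g1 hA0)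
      (mul_lt_mul_of_pos_left g2 hε0)) (mul_lt_mul_of_pos_left g3 hB0)
  · -- ContDiffOn
    intro t ht
    rw [hψd]
    exact (((contDiffAt_const.mul (Real.contDiffAt_rpow_const_of_ne ht.1.ne')).add
      (contDiffAt_const.mul (Real.contDiffAt_rpow_const_of_ne ht.1.ne'))).add
      (contDiffAt_const.mul (Real.contDiffAt_rpow_const_of_ne ht.1.ne'))).contDiffWithinAt
  · -- bound (1)
    intro t ht
    have hmax : max t 0 = t := max_eq_left ht.1.le
    have hφ : phi1D γ t = A * t ^ α := by rw [phi1D, hmax, ← hα, ← hA]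
    have hexp : 2 - 2 / (2 + γ) = β := by rw [hβ, hα]
    rw [hexp]
    have hψt : ψ t - phi1D γ t - ε * t ^ β = B * t ^ (1 + α) := by
      rw [hφ, hψd]; simp only; ring
    rw [hψt, abs_of_nonneg (mul_nonneg hB0.le (Real.rpow_nonneg ht.1.le _)),
      show β + X = 1 + α by rw [hβ, hXd]; ring]
  · -- ODE inequality
    intro t ht
    obtain ⟨ht0, htt⟩ := ht
    rw [hd1 t ⟨ht0, htt⟩, hd2 t ⟨ht0, htt⟩]
    have ht1 : t ≤ 1 := le_trans htt ht₀1
    have htα : 0 < t ^ α := Real.rpow_pos_of_pos ht0 _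
    have hφψ : A * t ^ α ≤ ψ t := by
      rw [hψd]; simp only
      linarith [mul_nonneg hε0.le (Real.rpow_nonneg ht0.le β),
        mul_nonneg hB0.le (Real.rpow_nonneg ht0.le (1+α))]
    have hφ0 : 0 < A * t ^ α := mul_pos hA0 htα
    have hconv := amgm_aux (γ + 1) (by linarith) hφ0 hφψ
    rw [show -(γ+1)-1 = -γ-2 by ring, show -(γ+1) = -γ-1 by ring,
      show (1:ℝ)+(γ+1) = γ+2 by ring] at hconv
    have hsplit : ∀ p : ℝ, (A * t ^ α) ^ p = A ^ p * t ^ (α * p) := by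
      intro p
      rw [Real.mul_rpow hA0.le (Real.rpow_nonneg ht0.le α), ← Real.rpow_mul ht0.le]
    have he1 : α * (-γ-1) = α - 2 := by linear_combination (-1 : ℝ) * hα2
    have he2 : α * (-γ-2) = -2 := by linear_combination (-1 : ℝ) * hα2
    rw [hsplit (-γ-1), hsplit (-γ-2), he1, he2] at hconv
    have hm1 : t ^ α * t ^ (-2:ℝ) = t ^ (α-2) := by
      rw [← Real.rpow_add ht0]; ring_nf
    have hm2 : t ^ β * t ^ (-2:ℝ) = t ^ (β-2) := by
      rw [← Real.rpow_add ht0]; ring_nf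
    have hm3 : t ^ (1+α) * t ^ (-2:ℝ) = t ^ (α-1) := by
      rw [← Real.rpow_add ht0]; ring_nf
    have hψm : t ^ (-2:ℝ) * ψ t = A * t^(α-2) + ε * t^(β-2) + B * t^(α-1) := by
      rw [← hm1, ← hm2, ← hm3, hψd]; simp only; ring
    have hAe1 : γ * c * A ^ (-γ-1 : ℝ) = 2*α*(1-α) * A := by
      have hAexp : A ^ (-γ-1 : ℝ) * A ^ (γ+2) = A := by
        rw [← Real.rpow_add hA0, show -γ-1+(γ+2) = 1 by ring, Real.rpow_one]
      have h4 : A ^ (-γ-1 : ℝ) = A / ((1 + γ/2)^2 * c) := by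
        rw [eq_div_iff (ne_of_gt hbase), ← hApow]; exact hAexp
      rw [h4, mul_div_assoc', div_eq_iff (ne_of_gt hbase)]
      linear_combination (c*A - c*A*(1-α)*(2+γ)/2) * hα2
    have hAe2 : γ * (γ+1) * c * A ^ (-γ-2:ℝ) = 2*β*(β-1) := by
      have hAexp : A ^ (-γ-2 : ℝ) * A ^ (γ+2) = 1 := by
        rw [← Real.rpow_add hA0, show -γ-2+(γ+2) = 0 by ring, Real.rpow_zero]
      have h4 : A ^ (-γ-2 : ℝ) = 1 / ((1 + γ/2)^2 * c) := by
        rw [eq_div_iff (ne_of_gt hbase), ← hApow]; exact hAexp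
      rw [h4, hβ, mul_one_div, div_eq_iff (ne_of_gt hbase)]
      linear_combination (-(c*(α*(2+γ) - 3*(2+γ) + 2))/2) * hα2
    have hψpos : 0 < ψ t := lt_of_lt_of_le hφ0 hφψ
    have hγc : 0 < γ * c := mul_pos hγ0 hc0
    have hW : Wpot' γ (ψ t) ≤ -(γ * c) * ((γ+2) * (A ^ (-γ-1:ℝ) * t ^ (α-2)))
        + γ * c * ((γ+1) * (A ^ (-γ-2:ℝ) * (A * t^(α-2) + ε * t^(β-2) + B * t^(α-1)))) := by
      simp only [Wpot']
      rw [← hc]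
      have h5 := mul_le_mul_of_nonneg_left hconv hγc.le
      have h6 : γ * c * ((γ+1) * (A ^ (-γ-2:ℝ) * t^(-2:ℝ) * ψ t))
          = γ * c * ((γ+1) * (A ^ (-γ-2:ℝ) * (A * t^(α-2) + ε * t^(β-2) + B * t^(α-1)))) := by
        rw [mul_assoc (A ^ (-γ-2:ℝ)), hψm]
      linarith [h5, h6]
    rw [hψ₁d, hψ₂d]
    simp only
    have r1 : t ^ (1+α-1) = t * t ^ (α-1) := by
      rw [show (1:ℝ)+α-1 = 1+(α-1) by ring, Real.rpow_add ht0, Real.rpow_one]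
    have r2 : t ^ (α-1-1) = t ^ (α-2) := by rw [show α-1-1 = α-2 by ring]
    have r3 : t ^ (β-1-1) = t ^ (β-2) := by rw [show β-1-1 = β-2 by ring]
    have r4 : t ^ (1+α-1-1) = t ^ (α-1) := by rw [show (1:ℝ)+α-1-1 = α-1 by ring]
    rw [r1, r2, r3, r4]
    have hAA : A ^ (-γ-2:ℝ) * A = A ^ (-γ-1:ℝ) := by
      nth_rewrite 2 [show A = A ^ (1:ℝ) by rw [Real.rpow_one]]
      rw [← Real.rpow_add hA0, show -γ-2+1 = -γ-1 by ring]
    have cidu : (-(γ * c) * ((γ+2) * A ^ (-γ-1:ℝ)) + γ*c*((γ+1) * (A ^ (-γ-2:ℝ) * A))) * t^(α-2)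
        = 2 * (A * (α * ((α-1)))) * t^(α-2) := by
      rw [hAA]
      have : -(γ * c) * ((γ+2) * A ^ (-γ-1:ℝ)) + γ*c*((γ+1) * A ^ (-γ-1:ℝ))
          = 2 * (A * (α * (α-1))) := by linear_combination (-1:ℝ) * hAe1
      rw [this]
    have hAe2u : γ * (γ+1) * c * A ^ (-γ-2:ℝ) * (ε * t^(β-2)) = 2*β*(β-1) * (ε * t^(β-2)) := by
      rw [hAe2]
    have hAe2v : γ * (γ+1) * c * A ^ (-γ-2:ℝ) * (B * t^(α-1)) = 2*β*(β-1) * (B * t^(α-1)) := by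
      rw [hAe2]
    have cid3u : (2*(1+α)*α - 2*β*(β-1)) * (B * t^(α-1)) = 4*X*(B * t^(α-1)) := by
      rw [show 2*(1+α)*α - 2*β*(β-1) = 4*X by rw [hβ, hXd]; ring]
    have hbb : t ^ (β-1) ≤ t ^ (α-1) :=
      Real.rpow_le_rpow_of_exponent_ge ht0 ht1 (by linarith)
    have hu0 : (0:ℝ) ≤ t ^ (α-1) := Real.rpow_nonneg ht0.le _
    have hw0 : (0:ℝ) ≤ t ^ (β-2) := Real.rpow_nonneg ht0.le _
    have hstep2 : 2 * (n:ℝ) * (1+α) * t ≤ X := by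
      have h8 : 2 * (n:ℝ) * (1+α) * t ≤ 2 * n * (1+α) * t₀ :=
        mul_le_mul_of_nonneg_left htt hD0.le
      linarith
    have hstep2' : 4 * (n:ℝ) * (B * ((1+α) * (t * t^(α-1)))) ≤ 2 * B * X * t^(α-1) := by
      have h7 := mul_le_mul_of_nonneg_right
        (mul_le_mul_of_nonneg_left hstep2 (by linarith : (0:ℝ) ≤ 2*B)) hu0
      linarith [h7]
    have hbb' : 4 * (n:ℝ) * (ε * (β * t^(β-1))) ≤ 4 * n * (ε * β) * t^(α-1) := by
      have h9 := mul_le_mul_of_nonneg_left hbb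
        (mul_nonneg (by linarith : (0:ℝ) ≤ 4*(n:ℝ)) (mul_nonneg hε0.le (by linarith))
          : (0:ℝ) ≤ 4 * (n:ℝ) * (ε * β))
      linarith [h9]
    have hBXu : B * X * t^(α-1) = 2*(n:ℝ)*(A*α + ε*β) * t^(α-1) := by rw [hBX]
    linarith [hW, hstep2', hbb', hBXu, cidu, cid3u, hAe2u, hAe2v, hu0, hw0]
  · -- ψ t₀ ≤ 1
    have h3' : ((1:ℝ)/4) ^ ((1:ℝ)/2) = 1/2 := by
      rw [show (1:ℝ)/4 = ((1:ℝ)/2)^((2:ℕ):ℝ) by rw [Real.rpow_natCast]; norm_num,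
        ← Real.rpow_mul (by norm_num)]
      norm_num
    have hAt : t₀ ^ α ≤ 1/2 := by
      have h1 : t₀ ^ α ≤ (1/4 : ℝ) ^ α :=
        Real.rpow_le_rpow ht₀0.le ht₀14 hα0.le
      have h2 : ((1:ℝ)/4) ^ α ≤ ((1:ℝ)/4) ^ ((1:ℝ)/2) :=
        Real.rpow_le_rpow_of_exponent_ge (by norm_num) (by norm_num) hαh.le
      linarith [h3' ▸ h2]
    have hb1 : t₀ ^ β ≤ 1 := Real.rpow_le_one ht₀0.le ht₀1 (by linarith)
    have kAα : A * α ≤ 3/4 := by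
      have h12 := mul_le_mul_of_nonneg_left hα1.le hA0.le
      linarith [h12]
    have hεb : ε ≤ 1/80 := by rw [hεd]; linarith [kAα]
    have hip : t₀ ^ (1+α) = t₀ * t₀ ^ α := by
      rw [Real.rpow_add ht₀0, Real.rpow_one]
    have hBt : B * t₀ ≤ A * α + ε * β := by
      have h0 : 0 ≤ B * t₀ * α := mul_nonneg (mul_nonneg hB0.le ht₀0.le) hα0.le
      linarith [hBt₀]
    have htα0 : (0:ℝ) ≤ t₀ ^ α := Real.rpow_nonneg ht₀0.le _
    have hβp0 : (0:ℝ) ≤ t₀ ^ β := Real.rpow_nonneg ht₀0.le _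
    have k1 : A * t₀ ^ α ≤ 3/4 * (1/2) := mul_le_mul hA34 hAt htα0 (by norm_num)
    have k2 : ε * t₀ ^ β ≤ 1/80 * 1 := mul_le_mul hεb hb1 hβp0 (by norm_num)
    have k3 : (B * t₀) * t₀ ^ α ≤ (A * α + ε * β) * (1/2) := mul_le_mul hBt hAt htα0 hAαεβ.le
    rw [hψd]
    simp only
    rw [hip]
    linarith [k1, k2, k3, kAα, hεA]
  · -- derivative bound at t₀
    rw [hd1 t₀ ⟨ht₀0, le_rfl⟩, hψ₁d]
    simp only
    have hu0 : (0:ℝ) ≤ t₀ ^ (α-1) := Real.rpow_nonneg ht₀0.le _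
    have hvb : t₀ ^ (β-1) ≤ t₀ ^ (α-1) :=
      Real.rpow_le_rpow_of_exponent_ge ht₀0 ht₀1 (by linarith)
    have r1 : t₀ ^ (1+α-1) = t₀ * t₀ ^ (α-1) := by
      rw [show (1:ℝ)+α-1 = 1+(α-1) by ring, Real.rpow_add ht₀0, Real.rpow_one]
    have k4 : B * ((1+α) * (t₀ * t₀ ^ (α-1))) ≤ (A*α + ε*β) * t₀^(α-1) := by
      have h13 := mul_le_mul_of_nonneg_right hBt₀ hu0
      linarith [h13]
    have k5 : ε * (β * t₀^(β-1)) ≤ (ε*β) * t₀^(α-1) := by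
      have h14 := mul_le_mul_of_nonneg_left hvb
        (mul_nonneg hε0.le (by linarith) : (0:ℝ) ≤ ε * β)
      linarith [h14]
    have k6 : (ε*β) * t₀^(α-1) ≤ (A*α/40) * t₀^(α-1) := mul_le_mul_of_nonneg_right hεA hu0
    have hsum : A * (α * t₀^(α-1)) + ε * (β * t₀^(β-1)) + B * ((1+α) * t₀^(1+α-1))
        ≤ (21/10) * (A*α*t₀^(α-1)) := by
      rw [r1]
      have hAu0 : (0:ℝ) ≤ A * α * t₀^(α-1) :=
        mul_nonneg (mul_nonneg hA0.le hα0.le) hu0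
      linarith [k4, k5, k6, hAu0]
    have hkey : (21/10) * (A*α*t₀^(α-1)) ≤ Real.sqrt (24*n) := by
      have hmc := min_cases (1/4 : ℝ) (X / (2 * ↑n * (1 + α)))
      rw [← ht₀d] at hmc
      rcases hmc with ⟨hm1, hm2⟩ | ⟨hm1, hm2⟩
      · -- t₀ = 1/4
        have hut : t₀ ^ (α-1) ≤ 2 := by
          rw [hm1]
          have h2' : ((1:ℝ)/4) ^ (α-1) ≤ ((1:ℝ)/4) ^ (-((1:ℝ)/2)) :=
            Real.rpow_le_rpow_of_exponent_ge (by norm_num) (by norm_num) (by linarith)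
          have h3'' : ((1:ℝ)/4) ^ (-((1:ℝ)/2)) = 2 := by
            rw [Real.rpow_neg (by norm_num : (0:ℝ) ≤ 1/4)]
            rw [show ((1:ℝ)/4) ^ ((1:ℝ)/2) = 1/2 from by
              rw [show (1:ℝ)/4 = ((1:ℝ)/2)^((2:ℕ):ℝ) by rw [Real.rpow_natCast]; norm_num,
                ← Real.rpow_mul (by norm_num)]
              norm_num]
            norm_num
          linarith [h3'' ▸ h2']
        have kAα : A * α ≤ 3/4 := by
          have h12 := mul_le_mul_of_nonneg_left hα1.le hA0.le
          linarith [h12]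
        have hb1 : A*α*t₀^(α-1) ≤ (3/4) * 2 := by
          have h15 := mul_le_mul kAα hut hu0 (by norm_num : (0:ℝ) ≤ 3/4)
          linarith
        have hsq : (63/20 : ℝ) ≤ Real.sqrt (24*n) := by
          rw [show (63:ℝ)/20 = Real.sqrt ((63/20)^2) from (Real.sqrt_sq (by norm_num)).symm]
          apply Real.sqrt_le_sqrt
          linarith [hn1]
        linarith
      · -- t₀ = X / (2 n (1+α))
        have hXa : 0 < X / (2*α^2) := div_pos hX0 (mul_pos two_pos (pow_pos hα0 2))
        have hb2 : (1+γ/2)^2 * c = (X/(2*α^2)) ^ ((2:ℕ):ℝ) := by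
          rw [Real.rpow_natCast, hXd, hα, hc]
          field_simp
          ring
        have hAalt : A = (X/(2*α^2)) ^ α := by
          rw [hA, cstar, ← hc, hb2, ← Real.rpow_mul hXa.le,
            show ((2:ℕ):ℝ) * (1/(γ+2)) = α by rw [hα]; push_cast; ring]
        have hDexp : (2*(n:ℝ)*(1+α)) ^ (α-1) * (2*(n:ℝ)*(1+α)) ^ (1-α) = 1 := by
          rw [← Real.rpow_add hD0, show α-1+(1-α) = 0 by ring, Real.rpow_zero]
        have ht₀exp : t₀ ^ (α-1) = X^(α-1) * (2*(n:ℝ)*(1+α))^(1-α) := by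
          rw [hm1, Real.div_rpow hX0.le hD0.le, div_eq_iff
            ((Real.rpow_pos_of_pos hD0 (α-1)).ne')]
          symm
          calc X^(α-1) * (2*(n:ℝ)*(1+α))^(1-α) * (2*(n:ℝ)*(1+α)) ^ (α-1)
              = X^(α-1) * ((2*(n:ℝ)*(1+α)) ^ (α-1) * (2*(n:ℝ)*(1+α))^(1-α)) := by ring
            _ = X^(α-1) := by rw [hDexp, mul_one]
        have e1 : (X/(2*α^2))^α = X^α * ((2*α^2)^α)⁻¹ := by
          rw [Real.div_rpow hX0.le (by positivity), div_eq_mul_inv]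
        have e2 : X^α * X^(α-1) = X^X := by
          rw [← Real.rpow_add hX0, show α+(α-1) = X by rw [hXd]; ring]
        have e3 : (2*α^2)^α = (2*α)^α * α^α := by
          rw [show 2*α^2 = (2*α)*α by ring, Real.mul_rpow (by linarith) hα0.le]
        have e4 : α * (α^α)⁻¹ = α^(1-α) := by
          rw [show (1:ℝ)-α = 1 + (-α) by ring, Real.rpow_add hα0, Real.rpow_one,
            Real.rpow_neg hα0.le]
        have e5 : (2*(n:ℝ)*(1+α))^(1-α) = 2^(1-α) * (n:ℝ)^(1-α) * (1+α)^(1-α) := by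
          rw [Real.mul_rpow (by linarith) (by linarith),
            Real.mul_rpow (by norm_num) hn0.le]
        have e6 : α^(1-α) * 2^(1-α) = (2*α)^(1-α) := by
          rw [Real.mul_rpow (by norm_num) hα0.le]; ring
        have e7 : (2*α)^(1-α) * ((2*α)^α)⁻¹ = (2*α)^(1-2*α) := by
          rw [← Real.rpow_neg (by linarith), ← Real.rpow_add (by linarith : (0:ℝ) < 2*α),
            show (1-α)+(-α) = 1-2*α by ring]
        have hfact : A * α * t₀^(α-1)
            = X^X * ((2*α)^(1-2*α) * ((1+α)^(1-α) * (n:ℝ)^(1-α))) := by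
          calc A * α * t₀^(α-1)
              = (X^α * X^(α-1)) * ((α * (α^α)⁻¹ * 2^(1-α)) * ((2*α)^α)⁻¹)
                * ((1+α)^(1-α) * (n:ℝ)^(1-α)) := by
                rw [hAalt, ht₀exp, e1, e3, e5]; ring
            _ = X^X * ((α^(1-α) * 2^(1-α)) * ((2*α)^α)⁻¹) * ((1+α)^(1-α) * (n:ℝ)^(1-α)) := by
                rw [e2, e4]
            _ = X^X * ((2*α)^(1-α) * ((2*α)^α)⁻¹) * ((1+α)^(1-α) * (n:ℝ)^(1-α)) := by
                rw [e6]
            _ = X^X * ((2*α)^(1-2*α) * ((1+α)^(1-α) * (n:ℝ)^(1-α))) := by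
                rw [e7]; ring
        have b1 : X^X ≤ 1 := Real.rpow_le_one hX0.le hX1 hX0.le
        have b2 : (2*α)^(1-2*α) ≤ 1 :=
          Real.rpow_le_one_of_one_le_of_nonpos (by linarith) (by linarith)
        have b3 : (1+α)^(1-α) ≤ Real.sqrt 2 := by
          have h1 : ((1:ℝ)+α)^(1-α) ≤ (2:ℝ)^(1-α) :=
            Real.rpow_le_rpow (by linarith) (by linarith) (by linarith)
          have h2 : (2:ℝ)^(1-α) ≤ (2:ℝ)^((1:ℝ)/2) :=
            Real.rpow_le_rpow_of_exponent_le (by norm_num) (by linarith)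
          rw [Real.sqrt_eq_rpow]
          linarith
        have b4 : (n:ℝ)^(1-α) ≤ Real.sqrt n := by
          have h2 : (n:ℝ)^(1-α) ≤ (n:ℝ)^((1:ℝ)/2) :=
            Real.rpow_le_rpow_of_exponent_le hn1 (by linarith)
          rw [Real.sqrt_eq_rpow]
          linarith
        have bn0 : (0:ℝ) ≤ (n:ℝ)^(1-α) := Real.rpow_nonneg hn0.le _
        have bp0 : (0:ℝ) ≤ (1+α)^(1-α) := Real.rpow_nonneg (by linarith) _
        have bq0 : (0:ℝ) ≤ (2*α)^(1-2*α) := Real.rpow_nonneg (by linarith) _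
        have bs2 : (0:ℝ) ≤ Real.sqrt 2 := Real.sqrt_nonneg _
        have bsn : (0:ℝ) ≤ Real.sqrt n := Real.sqrt_nonneg _
        have key : A * α * t₀^(α-1) ≤ Real.sqrt 2 * Real.sqrt n := by
          rw [hfact]
          have s1 : (1+α)^(1-α) * (n:ℝ)^(1-α) ≤ Real.sqrt 2 * Real.sqrt n :=
            mul_le_mul b3 b4 bn0 bs2
          have s2 : (2*α)^(1-2*α) * ((1+α)^(1-α) * (n:ℝ)^(1-α)) ≤ Real.sqrt 2 * Real.sqrt n := by
            have h10 := mul_le_mul_of_nonneg_right b2 (mul_nonneg bp0 bn0)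
            rw [one_mul] at h10
            linarith [h10, s1]
          have h11 := mul_le_mul_of_nonneg_right b1
            (mul_nonneg bq0 (mul_nonneg bp0 bn0))
          rw [one_mul] at h11
          linarith [h11, s2]
        have hfin : (21/10) * (Real.sqrt 2 * Real.sqrt (n:ℝ)) ≤ Real.sqrt (24*n) := by
          rw [← Real.sqrt_mul (by norm_num : (0:ℝ) ≤ 2)]
          rw [show (21:ℝ)/10 = Real.sqrt ((21/10)^2) from (Real.sqrt_sq (by norm_num)).symm]
          rw [← Real.sqrt_mul (by positivity)]
          apply Real.sqrt_le_sqrt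
          linarith [hn0]
        linarith
    linarith
end

section
/- Let n ≥ 1 and A > 0. There exists C_1 > 0 depending only on n and A such that the following holds for every γ ∈ (0,2) for which t_0 ≤ 1/2, where s_0 := c_γ^{1/γ} (so that W_γ(s_0) = 1) and t_0 is defined by φ_γ(t_0) = s_0. There exists a continuous nondecreasing function ψ : [0,1] → ℝ such that: (1) ψ = φ_γ on [0,t_0]; (2) ψ is twice continuously differentiable on (t_0,1) and 2ψ''(t) + 4n·ψ'(t) ≤ W_γ'(ψ(t)) for all t ∈ (t_0,1); (3) ψ(1) ≥ A and the right derivative of ψ at t_0 exists and is at most C_1. -/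
open MeasureTheory Metric Set Filter
open scoped ENNReal NNReal Topology

set_option maxHeartbeats 1000000 in
/-- The 1D profile of Lemma 4.2 (lem2). -/
theorem stmt6 (n : ℕ) (hn : 1 ≤ n) (A : ℝ) (hA : 0 < A) :
    ∃ C₁ : ℝ, 0 < C₁ ∧ ∀ γ ∈ Ioo (0:ℝ) 2, ∀ s₀ t₀ : ℝ,
      s₀ = ((2 - γ) ^ 2 / 16) ^ (1 / γ) → t₀ = (s₀ / cstar γ) ^ ((2 + γ) / 2) →
      t₀ ≤ 1/2 →
      ∃ ψ : ℝ → ℝ, ContinuousOn ψ (Icc 0 1) ∧ MonotoneOn ψ (Icc 0 1) ∧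
        (∀ t ∈ Icc (0:ℝ) t₀, ψ t = phi1D γ t) ∧
        (∀ t ∈ Ioo t₀ (1:ℝ), ContDiffAt ℝ 2 ψ t) ∧
        (∀ t ∈ Ioo t₀ (1:ℝ), 2 * deriv (deriv ψ) t + 4 * n * deriv ψ t ≤ Wpot' γ (ψ t)) ∧
        A ≤ ψ 1 ∧
        ∃ d : ℝ, HasDerivWithinAt ψ d (Ioi t₀) t₀ ∧ d ≤ C₁ := by
  have hN1 : (1:ℝ) ≤ (n:ℝ) := by exact_mod_cast hn
  have hNpos : (0:ℝ) < (n:ℝ) := by linarith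
  refine ⟨1 + (Real.exp (4*(n:ℝ)) + 8*(n:ℝ)*A), by positivity, ?_⟩
  rintro γ ⟨hγ0, hγ2⟩ s₀ t₀ hs₀ ht₀ ht₀le
  set N : ℝ := (n:ℝ) with hNdef
  set b : ℝ := Real.exp (4*N) + 8*N*A with hbdef
  have hbpos : 0 < b := by positivity
  have hbexp : Real.exp (4*N) ≤ b := by nlinarith
  set c : ℝ := (2-γ)^2/16 with hcdef
  have h2γ : 0 < 2 - γ := by linarith
  have hcpos : 0 < c := by positivity
  set α : ℝ := 2/(2+γ) with hαdef
  have h2γ' : 0 < 2 + γ := by linarith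
  have hα0 : 0 < α := by positivity
  have hα1 : α < 1 := by rw [hαdef, div_lt_one h2γ']; linarith
  have hbase : 0 < (1+γ/2)^2 * c := by positivity
  set a : ℝ := cstar γ with hadef
  have hapos : 0 < a := by
    rw [hadef, cstar, ← hcdef]; exact Real.rpow_pos_of_pos hbase _
  have hs₀pos : 0 < s₀ := by rw [hs₀]; exact Real.rpow_pos_of_pos hcpos _
  have hsa : 0 < s₀ / a := div_pos hs₀pos hapos
  have ht₀pos : 0 < t₀ := by rw [ht₀]; exact Real.rpow_pos_of_pos hsa _
  -- Key algebraic identities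
  have hK1 : a ^ (γ+2) = (1+γ/2)^2 * c := by
    rw [hadef, cstar, ← hcdef, ← Real.rpow_mul hbase.le, one_div,
      inv_mul_cancel₀ (by linarith : γ+2 ≠ 0), Real.rpow_one]
  have hK2 : s₀ ^ γ = c := by
    rw [hs₀, ← Real.rpow_mul hcpos.le, one_div,
      inv_mul_cancel₀ (by linarith : γ ≠ 0), Real.rpow_one]
  have hK4 : t₀ ^ (α-1) = (s₀/a) ^ (-(γ/2)) := by
    rw [ht₀, ← Real.rpow_mul hsa.le]
    congr 1
    rw [hαdef]; field_simp; ring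
  have hI1 : a * α * t₀ ^ (α-1) = 1 := by
    have hP : 0 < a * α * t₀ ^ (α-1) :=
      mul_pos (mul_pos hapos hα0) (Real.rpow_pos_of_pos ht₀pos _)
    have h1 : t₀^(α-1) * t₀^(α-1) = a^γ / c := by
      rw [hK4, ← Real.rpow_add hsa]
      rw [show -(γ/2) + -(γ/2) = -γ by ring]
      rw [Real.rpow_neg hsa.le, Real.div_rpow hs₀pos.le hapos.le, hK2, inv_div]
    have h3 : a^γ * a^2 = (1+γ/2)^2 * c := by
      rw [show (a:ℝ)^2 = a^(2:ℝ) by rw [← Real.rpow_natCast a 2]; norm_num,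
        ← Real.rpow_add hapos, ← hK1]
    have hα2 : α * (1+γ/2) = 1 := by rw [hαdef]; field_simp
    have hsq : (a * α * t₀ ^ (α-1))^2 = 1 := by
      calc (a * α * t₀ ^ (α-1))^2 = (t₀^(α-1) * t₀^(α-1)) * (a^2 * α^2) := by ring
      _ = (a^γ / c) * (a^2 * α^2) := by rw [h1]
      _ = (a^γ * a^2) * α^2 / c := by ring
      _ = ((1+γ/2)^2 * c) * α^2 / c := by rw [h3]
      _ = (α * (1+γ/2))^2 * (c / c) := by ring
      _ = 1 := by rw [hα2, div_self hcpos.ne']; norm_num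
    have hfac : (a * α * t₀ ^ (α-1) - 1) * (a * α * t₀ ^ (α-1) + 1) = 0 := by
      linear_combination hsq
    rcases mul_eq_zero.mp hfac with h | h
    · linarith
    · linarith
  have hI2 : ∀ t : ℝ, 0 < t →
      2 * (a * α * ((α-1) * t ^ (α-2))) = -(γ * c * (a * t^α) ^ (-γ-1)) := by
    intro t ht
    have e1 : (a * t^α) ^ (-γ-1) = a^(-γ-1) * t^(α-2) := by
      rw [Real.mul_rpow hapos.le (Real.rpow_nonneg ht.le α),
        ← Real.rpow_mul ht.le]
      congr 2
      rw [hαdef]; field_simp; ring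
    have e3 : a^(-γ-1) = a * ((1+γ/2)^2*c)⁻¹ := by
      rw [show -γ-1 = 1 + -(γ+2) by ring, Real.rpow_add hapos, Real.rpow_one,
        Real.rpow_neg hapos.le, hK1]
    rw [e1, e3, hαdef]
    field_simp
    ring
  -- The profile
  set ψ : ℝ → ℝ := fun t => a * (max t 0)^α + (b/(4*N))*(1 - Real.exp (-(4*N) * max (t - t₀) 0)) with hψdef
  set F : ℝ → ℝ := fun x => a * x^α + (b/(4*N))*(1 - Real.exp (-(4*N) * (x - t₀))) with hFdef
  set G : ℝ → ℝ := fun x => a * α * x^(α-1) + b * Real.exp (-(4*N) * (x - t₀)) with hGdef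
  have hN4 : (4:ℝ)*N ≠ 0 := by positivity
  have hψF : ∀ x ∈ Ioi t₀, ψ x = F x := by
    intro x hx
    have hx0 : (0:ℝ) ≤ x := (ht₀pos.trans hx).le
    simp only [hψdef, hFdef, max_eq_left hx0,
      max_eq_left (sub_nonneg.mpr (le_of_lt (mem_Ioi.mp hx)))]
  have hFG : ∀ x : ℝ, 0 < x → HasDerivAt F (G x) x := by
    intro x hx0
    have h1 : HasDerivAt (fun y:ℝ => y ^ α) (α * x^(α-1)) x :=
      Real.hasDerivAt_rpow_const (Or.inl hx0.ne')
    have h2 : HasDerivAt (fun y:ℝ => -(4*N) * (y - t₀)) (-(4*N)) x := by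
      simpa using ((hasDerivAt_id x).sub_const t₀).const_mul (-(4*N))
    have h3 : HasDerivAt (fun y:ℝ => Real.exp (-(4*N)*(y-t₀)))
        (Real.exp (-(4*N)*(x-t₀)) * -(4*N)) x := (Real.hasDerivAt_exp _).comp x h2
    have h4 := ((hasDerivAt_const x (1:ℝ)).sub h3).const_mul (b/(4*N))
    have h5 := (h1.const_mul a).add h4
    refine h5.congr_deriv ?_
    simp only [hGdef]
    field_simp
    ring
  have hGd : ∀ x : ℝ, 0 < x →
      HasDerivAt G (a * α * ((α-1) * x^(α-2)) + b * (Real.exp (-(4*N)*(x-t₀)) * -(4*N))) x := by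
    intro x hx0
    have h1 : HasDerivAt (fun y:ℝ => y ^ (α-1)) ((α-1) * x^(α-1-1)) x :=
      Real.hasDerivAt_rpow_const (Or.inl hx0.ne')
    have h2 : HasDerivAt (fun y:ℝ => -(4*N) * (y - t₀)) (-(4*N)) x := by
      simpa using ((hasDerivAt_id x).sub_const t₀).const_mul (-(4*N))
    have h3 : HasDerivAt (fun y:ℝ => Real.exp (-(4*N)*(y-t₀)))
        (Real.exp (-(4*N)*(x-t₀)) * -(4*N)) x := (Real.hasDerivAt_exp _).comp x h2
    have h5 := (h1.const_mul (a*α)).add (h3.const_mul b)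
    refine h5.congr_deriv ?_
    rw [show α-1-1 = α-2 by ring]
  refine ⟨ψ, ?_, ?_, ?_, ?_, ?_, ?_, ?_⟩
  · -- continuity
    have c1 : Continuous fun t:ℝ => (max t 0)^α := by
      apply Continuous.rpow_const (continuous_id.max continuous_const)
      intro x; exact Or.inr hα0.le
    have c3 : Continuous fun t:ℝ => Real.exp (-(4*N) * max (t - t₀) 0) :=
      Real.continuous_exp.comp (continuous_const.mul
        ((continuous_id.sub continuous_const).max continuous_const))
    exact (((continuous_const.mul c1).add
      (continuous_const.mul (continuous_const.sub c3)))).continuousOn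
  · -- monotone
    have hmono : Monotone ψ := by
      intro x y hxy
      have m1 : max x 0 ≤ max y 0 := max_le_max hxy le_rfl
      have m2 : max (x-t₀) 0 ≤ max (y-t₀) 0 := max_le_max (by linarith) le_rfl
      have r1 : (max x 0)^α ≤ (max y 0)^α :=
        Real.rpow_le_rpow (le_max_right x 0) m1 hα0.le
      have r2 : Real.exp (-(4*N) * max (y-t₀) 0) ≤ Real.exp (-(4*N) * max (x-t₀) 0) :=
        Real.exp_le_exp.mpr (by nlinarith)
      have hb4 : (0:ℝ) ≤ b/(4*N) := by positivity
      simp only [hψdef]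
      have := mul_le_mul_of_nonneg_left r1 hapos.le
      have := mul_le_mul_of_nonneg_left (by linarith : 
        1 - Real.exp (-(4*N) * max (x-t₀) 0) ≤ 1 - Real.exp (-(4*N) * max (y-t₀) 0)) hb4
      linarith
    exact hmono.monotoneOn _
  · -- equals phi1D on [0, t₀]
    rintro t ⟨ht0, htt₀⟩
    have hm : max (t - t₀) 0 = 0 := max_eq_right (by linarith)
    simp only [hψdef, hm, mul_zero, Real.exp_zero, sub_self, add_zero, phi1D,
      ← hadef, ← hαdef]
  · -- C² on (t₀, 1)
    rintro t ⟨ht1, ht2⟩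
    have ht0 : 0 < t := ht₀pos.trans ht1
    have hmem : Ioi t₀ ∈ 𝓝 t := Ioi_mem_nhds ht1
    have hEv : ψ =ᶠ[𝓝 t] F := Filter.eventuallyEq_of_mem hmem hψF
    have d1 : ContDiffAt ℝ 2 (fun x:ℝ => x ^ α) t :=
      Real.contDiffAt_rpow_const_of_ne ht0.ne'
    have d2 : ContDiffAt ℝ 2 (fun x:ℝ => Real.exp (-(4*N)*(x-t₀))) t := by
      exact (Real.contDiff_exp.of_le le_top).contDiffAt.comp t
        ((contDiff_const.mul (contDiff_id.sub contDiff_const) :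
          ContDiff ℝ 2 fun x:ℝ => -(4*N)*(x - t₀)).contDiffAt)
    have hFt : ContDiffAt ℝ 2 F t :=
      (contDiffAt_const.mul d1).add
        (contDiffAt_const.mul (contDiffAt_const.sub d2))
    exact hFt.congr_of_eventuallyEq hEv
  · -- differential inequality
    rintro t ⟨ht1, ht2⟩
    have ht0 : 0 < t := ht₀pos.trans ht1
    have hmem : Ioi t₀ ∈ 𝓝 t := Ioi_mem_nhds ht1
    have hEv : ψ =ᶠ[𝓝 t] F := Filter.eventuallyEq_of_mem hmem hψF
    have hder1 : deriv ψ =ᶠ[𝓝 t] G :=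
      hEv.deriv.trans (Filter.eventuallyEq_of_mem hmem
        (fun x hx => (hFG x (ht₀pos.trans hx)).deriv))
    have hψ't : deriv ψ t = G t := hder1.eq_of_nhds
    have hψ''t : deriv (deriv ψ) t
        = a * α * ((α-1) * t^(α-2)) + b * (Real.exp (-(4*N)*(t-t₀)) * -(4*N)) := by
      rw [hder1.deriv_eq]; exact (hGd t ht0).deriv
    set E : ℝ := Real.exp (-(4*N)*(t-t₀)) with hEdef
    have hE1 : E ≤ 1 := Real.exp_le_one_iff.mpr (by nlinarith)
    have hψt : ψ t = a * t^α + (b/(4*N))*(1-E) := by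
      simp only [hψdef, max_eq_left ht0.le, max_eq_left (sub_nonneg.mpr ht1.le), hEdef]
    have hatpos : 0 < a * t^α := mul_pos hapos (Real.rpow_pos_of_pos ht0 _)
    have hψge : a * t^α ≤ ψ t := by
      rw [hψt]
      have : (0:ℝ) ≤ (b/(4*N))*(1-E) := by
        apply mul_nonneg (by positivity); linarith
      linarith
    have hψpos : 0 < ψ t := lt_of_lt_of_le hatpos hψge
    have hW : Wpot' γ (ψ t) = -(γ * c * (ψ t)^(-γ-1)) := by
      rw [Wpot', ← hcdef]
    have key1 : γ * c * (ψ t)^(-γ-1) ≤ γ * c * (a*t^α)^(-γ-1) := by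
      have h := Real.rpow_le_rpow_of_nonpos hatpos hψge (by linarith : -γ-1 ≤ 0)
      exact mul_le_mul_of_nonneg_left h (by positivity)
    have key2 : a * α * t^(α-1) ≤ 1 := by
      have h1 : t^(α-1) ≤ t₀^(α-1) :=
        Real.rpow_le_rpow_of_nonpos ht₀pos ht1.le (by linarith)
      calc a * α * t^(α-1) ≤ a * α * t₀^(α-1) :=
            mul_le_mul_of_nonneg_left h1 (by positivity)
        _ = 1 := hI1
    have key3 : 1 ≤ b * E := by
      have hEe : Real.exp (-(4*N)) ≤ E := Real.exp_le_exp.mpr (by nlinarith)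
      calc (1:ℝ) = Real.exp (4*N) * Real.exp (-(4*N)) := by
            rw [← Real.exp_add]; norm_num
        _ ≤ b * E := mul_le_mul hbexp hEe (Real.exp_pos _).le hbpos.le
    have hODE := hI2 t ht0
    rw [hψ''t, hψ't, hW, hGdef]
    have expand : 2 * (a * α * ((α-1) * t^(α-2)) + b * (E * -(4*N)))
        + 4 * N * (a * α * t^(α-1) + b * E)
        = 2 * (a * α * ((α-1) * t^(α-2))) + 4 * N * (a * α * t^(α-1) - b * E) := by
      ring
    calc 2 * (a * α * ((α-1) * t^(α-2)) + b * (E * -(4*N)))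
          + 4 * N * (a * α * t^(α-1) + b * E)
        = 2 * (a * α * ((α-1) * t^(α-2))) + 4 * N * (a * α * t^(α-1) - b * E) := expand
      _ ≤ 2 * (a * α * ((α-1) * t^(α-2))) + 4 * N * 0 := by
          have : a * α * t^(α-1) - b * E ≤ 0 := by linarith
          have := mul_le_mul_of_nonneg_left this (by positivity : (0:ℝ) ≤ 4*N)
          linarith
      _ = -(γ * c * (a*t^α)^(-γ-1)) := by rw [mul_zero, add_zero, hODE]
      _ ≤ -(γ * c * (ψ t)^(-γ-1)) := by linarith
  · -- value at 1
    have hm1 : max (1:ℝ) 0 = 1 := max_eq_left zero_le_one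
    have hm2 : max ((1:ℝ) - t₀) 0 = 1 - t₀ := max_eq_left (by linarith)
    have hψ1 : ψ 1 = a * 1^α + (b/(4*N))*(1 - Real.exp (-(4*N)*(1-t₀))) := by
      simp only [hψdef, hm1, hm2]
    have ha1 : a * (1:ℝ)^α = a := by rw [Real.one_rpow, mul_one]
    have e1 : Real.exp (-(4*N)*(1-t₀)) ≤ Real.exp (-2 : ℝ) :=
      Real.exp_le_exp.mpr (by nlinarith)
    have e2 : Real.exp (-2:ℝ) ≤ 1/2 := by
      rw [Real.exp_neg]
      have h3 : (2:ℝ) ≤ Real.exp 2 := by nlinarith [Real.add_one_le_exp (2:ℝ)]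
      rw [inv_le_comm₀ (Real.exp_pos 2) (by norm_num)]
      calc (1/2:ℝ)⁻¹ = 2 := by norm_num
        _ ≤ Real.exp 2 := h3
    have hbound : A ≤ (b/(4*N))*(1 - Real.exp (-(4*N)*(1-t₀))) := by
      rw [div_mul_eq_mul_div, le_div_iff₀ (by positivity : (0:ℝ) < 4*N)]
      nlinarith [Real.exp_pos (4*N)]
    rw [hψ1, ha1]
    linarith
  · -- right derivative at t₀
    refine ⟨G t₀, ?_, ?_⟩
    · have hF0 : HasDerivAt F (G t₀) t₀ := hFG t₀ ht₀pos
      have hval : ψ t₀ = F t₀ := by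
        simp only [hψdef, hFdef, max_eq_left ht₀pos.le, sub_self, max_self,
          mul_zero, Real.exp_zero]
      exact (hF0.hasDerivWithinAt).congr (fun x hx => hψF x hx) hval
    · have : G t₀ = 1 + b := by
        simp only [hGdef, sub_self, mul_zero, Real.exp_zero, mul_one, hI1]
      rw [this]
end

section
/- For every a > 0 and every continuous function f : [0,a] → ℝ, one has lim_{γ→2⁻} ∫_0^a f(t)·(φ_γ'(t)² + W_γ(φ_γ(t))) dt = f(0). (Equivalently, the measures (φ_γ'(t)² + W_γ(φ_γ(t))) dt on [0,a] converge weakly to the Dirac delta at 0 as γ → 2⁻.) -/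
open MeasureTheory Metric Set Filter
open scoped ENNReal NNReal Topology

open Real

noncomputable def eps (γ : ℝ) : ℝ := (2 - γ) / (2 + γ)
noncomputable def Cc (γ : ℝ) : ℝ := 2 * (2 / (2 + γ)) ^ 2 * (cstar γ) ^ 2

lemma cstar_pos {γ : ℝ} (hγ : γ ∈ Ioo (0:ℝ) 2) : 0 < cstar γ := by
  apply Real.rpow_pos_of_pos
  have h1 : (0:ℝ) < (1 + γ/2)^2 := by nlinarith [hγ.1, hγ.2]
  have h2 : (0:ℝ) < (2 - γ)^2/16 := by nlinarith [hγ.2]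
  positivity

lemma cstar_rpow {γ : ℝ} (hγ : γ ∈ Ioo (0:ℝ) 2) :
    cstar γ ^ (γ + 2) = (1 + γ/2)^2 * ((2 - γ)^2/16) := by
  have hne : γ + 2 ≠ 0 := by nlinarith [hγ.1]
  have hX : (0:ℝ) ≤ (1 + γ/2)^2 * ((2 - γ)^2/16) := by positivity
  rw [cstar, ← Real.rpow_mul hX, one_div, inv_mul_cancel₀ hne, Real.rpow_one]

lemma coeff_eq {γ : ℝ} (hγ : γ ∈ Ioo (0:ℝ) 2) :
    ((2 - γ)^2/16) * (cstar γ) ^ (-γ) = (2/(2+γ))^2 * (cstar γ)^2 := by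
  have hc := cstar_pos hγ
  have hγ2 : (2:ℝ) + γ ≠ 0 := by nlinarith [hγ.1]
  have key : cstar γ ^ (γ + 2) = (1 + γ/2)^2 * ((2 - γ)^2/16) := cstar_rpow hγ
  have h1 : cstar γ ^ (γ + 2) = cstar γ ^ γ * cstar γ ^ (2:ℝ) := by
    rw [← Real.rpow_add hc]
  have h2 : (cstar γ : ℝ) ^ (2:ℝ) = cstar γ ^ 2 := by
    rw [Real.rpow_two, sq]
  have hneg : cstar γ ^ (-γ) = (cstar γ ^ γ)⁻¹ := by rw [Real.rpow_neg hc.le]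
  have hγpow : (0:ℝ) < cstar γ ^ γ := Real.rpow_pos_of_pos hc γ
  rw [hneg]
  rw [h1, h2] at key
  field_simp
  nlinarith [key, hγpow]

lemma density {γ : ℝ} (hγ : γ ∈ Ioo (0:ℝ) 2) {t : ℝ} (ht : 0 < t) :
    (deriv (phi1D γ) t)^2 + Wpot γ (phi1D γ t) = Cc γ * t ^ (eps γ - 1) := by
  have hc := cstar_pos hγ
  have hγ2 : (0:ℝ) < 2 + γ := by nlinarith [hγ.1]
  have heq : phi1D γ =ᶠ[𝓝 t] fun s => cstar γ * s ^ (2/(2+γ)) := by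
    filter_upwards [Ioi_mem_nhds ht] with s hs
    simp [phi1D, max_eq_left (le_of_lt (mem_Ioi.mp hs))]
  have hderiv : deriv (phi1D γ) t = cstar γ * ((2/(2+γ)) * t ^ (2/(2+γ) - 1)) := by
    rw [heq.deriv_eq]
    exact (((Real.hasDerivAt_rpow_const (p := 2/(2+γ)) (Or.inl ht.ne'))).const_mul (cstar γ)).deriv
  have hphi : phi1D γ t = cstar γ * t ^ (2/(2+γ)) := by
    simp [phi1D, max_eq_left ht.le]
  have hphipos : 0 < phi1D γ t := by
    rw [hphi]; positivity
  have hW : Wpot γ (phi1D γ t) =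
      ((2 - γ)^2/16) * ((cstar γ) ^ (-γ) * t ^ ((2/(2+γ)) * (-γ))) := by
    rw [Wpot, if_pos hphipos, hphi, Real.mul_rpow hc.le (Real.rpow_nonneg ht.le _),
      ← Real.rpow_mul ht.le]
  -- exponents
  have hexp1 : (2/(2+γ) - 1) * 2 = eps γ - 1 := by
    rw [eps]; field_simp; ring
  have hexp2 : (2/(2+γ)) * (-γ) = eps γ - 1 := by
    rw [eps]; field_simp; ring
  have hsq : (t ^ (2/(2+γ) - 1))^2 = t ^ (eps γ - 1) := by
    rw [← Real.rpow_natCast (t ^ (2/(2+γ)-1)) 2, ← Real.rpow_mul ht.le]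
    norm_num [hexp1]
  rw [hderiv, hW, hexp2, Cc]
  rw [mul_pow, mul_pow, hsq]
  have := coeff_eq hγ
  nlinarith [this, Real.rpow_pos_of_pos ht (eps γ - 1)]

noncomputable def Efn (c γ : ℝ) : ℝ :=
  eps γ * Real.log c + (2/(γ+2))*(2*Real.log (1+γ/2) - Real.log 16) + Real.log (2+γ)
    + ((2-γ)/(γ+2)) * Real.log (2-γ)

lemma N_eq {c γ : ℝ} (hc : 0 < c) (hγ : γ ∈ Ioo (0:ℝ) 2) :
    Cc γ * c ^ (eps γ) / eps γ = 2 * (2/(2+γ))^2 * Real.exp (Efn c γ) := by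
  have h1 : (0:ℝ) < 1 + γ/2 := by nlinarith [hγ.1]
  have h2 : (0:ℝ) < 2 - γ := by nlinarith [hγ.2]
  have h3 : (0:ℝ) < γ + 2 := by nlinarith [hγ.1]
  have hB : (0:ℝ) < (1 + γ/2)^2 * ((2-γ)^2/16) := by positivity
  have hcs : cstar γ = Real.exp ((1/(γ+2)) * Real.log ((1 + γ/2)^2 * ((2-γ)^2/16))) := by
    rw [cstar, Real.rpow_def_of_pos hB, mul_comm]
  have hlogB : Real.log ((1 + γ/2)^2 * ((2-γ)^2/16)) =
      2*Real.log (1+γ/2) + (2*Real.log (2-γ) - Real.log 16) := by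
    rw [Real.log_mul (by positivity) (by positivity), Real.log_div (by positivity) (by norm_num),
      Real.log_pow, Real.log_pow]
    push_cast; ring
  have hceps : c ^ (eps γ) = Real.exp (eps γ * Real.log c) := by
    rw [Real.rpow_def_of_pos hc, mul_comm]
  have hinv : (eps γ)⁻¹ = Real.exp (Real.log (2+γ) - Real.log (2-γ)) := by
    rw [show Real.log (2+γ) - Real.log (2-γ) = Real.log ((2+γ)/(2-γ)) from
      (Real.log_div (by linarith) (by linarith)).symm,
      Real.exp_log (div_pos (by linarith) h2), eps, inv_div]
  have hcs2 : (cstar γ)^2 = Real.exp ((2/(γ+2)) * Real.log ((1 + γ/2)^2 * ((2-γ)^2/16))) := by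
    rw [hcs, sq, ← Real.exp_add]
    congr 1; ring
  rw [Cc, div_eq_mul_inv, hceps, hinv, hcs2, hlogB]
  rw [mul_assoc, mul_assoc, ← Real.exp_add, ← Real.exp_add]
  congr 1
  rw [Efn, eps]
  field_simp
  ring

lemma Efn_tendsto (c : ℝ) :
    Tendsto (Efn c) (𝓝[<] (2:ℝ)) (𝓝 (Real.log 2)) := by
  have hden : Tendsto (fun γ : ℝ => γ + 2) (𝓝 (2:ℝ)) (𝓝 4) := by
    have := (continuous_id.tendsto (2:ℝ)).add (tendsto_const_nhds (x := (2:ℝ)))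
    norm_num at this; exact this
  have h2mg : Tendsto (fun γ : ℝ => 2 - γ) (𝓝[<] (2:ℝ)) (𝓝[>] (0:ℝ)) := by
    apply tendsto_nhdsWithin_of_tendsto_nhds_of_eventually_within
    · have : Tendsto (fun γ : ℝ => 2 - γ) (𝓝 (2:ℝ)) (𝓝 (2 - 2)) :=
        (continuous_const.sub continuous_id).tendsto 2
      simpa using this.mono_left nhdsWithin_le_nhds
    · filter_upwards [self_mem_nhdsWithin] with γ (hγ : γ < 2)
      exact mem_Ioi.2 (by linarith)
  have hxlogx : Tendsto (fun γ : ℝ => Real.log (2-γ) * (2-γ) ^ (1:ℝ)) (𝓝[<] (2:ℝ)) (𝓝 0) :=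
    (tendsto_log_mul_rpow_nhdsGT_zero one_pos).comp h2mg
  have hlast : Tendsto (fun γ : ℝ => ((2-γ)/(γ+2)) * Real.log (2-γ)) (𝓝[<] (2:ℝ)) (𝓝 0) := by
    have hinv : Tendsto (fun γ : ℝ => (γ+2)⁻¹) (𝓝[<] (2:ℝ)) (𝓝 ((4:ℝ)⁻¹)) :=
      (hden.inv₀ (by norm_num)).mono_left nhdsWithin_le_nhds
    have := hxlogx.mul hinv
    rw [zero_mul] at this
    refine this.congr (fun γ => ?_)
    rw [Real.rpow_one]; ring
  have h1 : Tendsto (fun γ : ℝ => eps γ * Real.log c) (𝓝[<] (2:ℝ)) (𝓝 0) := by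
    have hnum : Tendsto (fun γ : ℝ => 2 - γ) (𝓝 (2:ℝ)) (𝓝 0) := by
      have := (tendsto_const_nhds (x := (2:ℝ))).sub (continuous_id.tendsto (2:ℝ))
      norm_num at this; exact this
    have hden2 : Tendsto (fun γ : ℝ => 2 + γ) (𝓝 (2:ℝ)) (𝓝 4) := by
      have := (tendsto_const_nhds (x := (2:ℝ))).add (continuous_id.tendsto (2:ℝ))
      norm_num at this; exact this
    have := ((hnum.div hden2 (by norm_num)).mul (tendsto_const_nhds (x := Real.log c)))
    norm_num at this
    exact (this.mono_left nhdsWithin_le_nhds).congr (fun γ => by rw [eps])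
  have hA : Tendsto (fun γ : ℝ => 2/(γ+2)) (𝓝 (2:ℝ)) (𝓝 (2/4)) :=
    tendsto_const_nhds.div hden (by norm_num)
  have hlog12 : Tendsto (fun γ : ℝ => Real.log (1+γ/2)) (𝓝 (2:ℝ)) (𝓝 (Real.log 2)) := by
    have hin : Tendsto (fun γ : ℝ => 1 + γ/2) (𝓝 (2:ℝ)) (𝓝 2) := by
      have := (tendsto_const_nhds (x := (1:ℝ))).add ((continuous_id.tendsto (2:ℝ)).div_const 2)
      norm_num at this; exact this
    exact ((Real.continuousAt_log (by norm_num)).tendsto.comp hin)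
  have h2 : Tendsto (fun γ : ℝ => (2/(γ+2))*(2*Real.log (1+γ/2) - Real.log 16))
      (𝓝[<] (2:ℝ)) (𝓝 ((2/4)*(2*Real.log 2 - Real.log 16))) :=
    (hA.mul ((tendsto_const_nhds.mul hlog12).sub tendsto_const_nhds)).mono_left nhdsWithin_le_nhds
  have h3 : Tendsto (fun γ : ℝ => Real.log (2+γ)) (𝓝[<] (2:ℝ)) (𝓝 (Real.log 4)) := by
    have hin : Tendsto (fun γ : ℝ => 2 + γ) (𝓝 (2:ℝ)) (𝓝 4) := by
      have := (tendsto_const_nhds (x := (2:ℝ))).add (continuous_id.tendsto (2:ℝ))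
      norm_num at this; exact this
    exact ((Real.continuousAt_log (by norm_num)).tendsto.comp hin).mono_left nhdsWithin_le_nhds
  have htot := ((h1.add h2).add h3).add hlast
  have hval : ((0 + (2/4)*(2*Real.log 2 - Real.log 16)) + Real.log 4) + 0 = Real.log 2 := by
    have h16 : Real.log 16 = 4 * Real.log 2 := by
      rw [show (16:ℝ) = 2^4 by norm_num, Real.log_pow]; push_cast; ring
    have h4 : Real.log 4 = 2 * Real.log 2 := by
      rw [show (4:ℝ) = 2^2 by norm_num, Real.log_pow]; push_cast; ring
    rw [h16, h4]; ring
  rw [hval] at htot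
  exact htot.congr (fun γ => by rw [Efn])

lemma N_tendsto {c : ℝ} (hc : 0 < c) :
    Tendsto (fun γ => Cc γ * c ^ (eps γ) / eps γ) (𝓝[<] (2:ℝ)) (𝓝 1) := by
  have hmem : Ioo (0:ℝ) 2 ∈ 𝓝[<] (2:ℝ) := Ioo_mem_nhdsLT_of_mem ⟨by norm_num, le_refl _⟩
  have hexp : Tendsto (fun γ => Real.exp (Efn c γ)) (𝓝[<] (2:ℝ)) (𝓝 2) := by
    have := (Real.continuous_exp.tendsto (Real.log 2)).comp (Efn_tendsto c)
    rwa [Function.comp_def, Real.exp_log (by norm_num)] at this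
  have hden : Tendsto (fun γ : ℝ => 2 + γ) (𝓝 (2:ℝ)) (𝓝 4) := by
    have := (tendsto_const_nhds (x := (2:ℝ))).add (continuous_id.tendsto (2:ℝ))
    norm_num at this; exact this
  have hcoef : Tendsto (fun γ : ℝ => 2 * (2/(2+γ))^2) (𝓝[<] (2:ℝ)) (𝓝 (2 * (2/4)^2)) :=
    (tendsto_const_nhds.mul ((tendsto_const_nhds.div hden (by norm_num)).pow 2)).mono_left
      nhdsWithin_le_nhds
  have htot := hcoef.mul hexp
  norm_num at htot
  apply htot.congr'
  filter_upwards [hmem] with γ hγ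
  rw [N_eq hc hγ]

lemma eps_pos {γ : ℝ} (hγ : γ ∈ Ioo (0:ℝ) 2) : 0 < eps γ :=
  div_pos (by linarith [hγ.2]) (by linarith [hγ.1])

lemma Cc_nonneg (γ : ℝ) : 0 ≤ Cc γ := by rw [Cc]; positivity

lemma integrable_w {γ c : ℝ} (hγ : γ ∈ Ioo (0:ℝ) 2) (hc : 0 < c) :
    IntegrableOn (fun t => Cc γ * t ^ (eps γ - 1)) (Ioc (0:ℝ) c) volume := by
  have h := intervalIntegral.intervalIntegrable_rpow' (a := (0:ℝ)) (b := c) (r := eps γ - 1)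
    (by linarith [eps_pos hγ])
  exact ((intervalIntegrable_iff_integrableOn_Ioc_of_le hc.le).mp h).const_mul (Cc γ)

lemma int_w {γ c : ℝ} (hγ : γ ∈ Ioo (0:ℝ) 2) (hc : 0 < c) :
    ∫ t in Ioc (0:ℝ) c, Cc γ * t ^ (eps γ - 1) = Cc γ * c ^ (eps γ) / eps γ := by
  rw [← intervalIntegral.integral_of_le hc.le, intervalIntegral.integral_const_mul,
    integral_rpow (Or.inl (by linarith [eps_pos hγ]))]
  rw [show eps γ - 1 + 1 = eps γ by ring, Real.zero_rpow (ne_of_gt (eps_pos hγ))]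
  ring


lemma arith1 (x η : ℝ) (hx : 0 ≤ x) (hη : 0 < η) : x * (η/(8*(x+1))) ≤ η/8 := by
  rw [mul_div_assoc', div_le_div_iff₀ (by positivity) (by norm_num)]
  nlinarith


lemma main_est (a : ℝ) (ha : 0 < a) (f : ℝ → ℝ) (hf : ContinuousOn f (Icc 0 a)) :
    Tendsto (fun γ => ∫ t in Ioc (0:ℝ) a, f t * (Cc γ * t ^ (eps γ - 1)))
      (𝓝[<] (2:ℝ)) (𝓝 (f 0)) := by
  obtain ⟨B, hB⟩ := (isCompact_Icc).exists_bound_of_continuousOn hf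
  have h0mem : (0:ℝ) ∈ Icc (0:ℝ) a := ⟨le_refl _, ha.le⟩
  have hB0 : 0 ≤ B := le_trans (norm_nonneg _) (hB 0 h0mem)
  have hf0B : |f 0| ≤ B := by simpa [Real.norm_eq_abs] using hB 0 h0mem
  rw [Metric.tendsto_nhds]
  intro η hη
  -- choose δ
  have h0 : ContinuousWithinAt f (Icc 0 a) 0 := hf 0 h0mem
  rw [Metric.continuousWithinAt_iff] at h0
  obtain ⟨δ0, hδ0pos, hδ0⟩ := h0 (η/8) (by positivity)
  set δ := min (δ0/2) a with hδdef
  have hδpos : 0 < δ := lt_min (by positivity) ha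
  have hδa : δ ≤ a := min_le_right _ _
  have hsmall : ∀ t ∈ Ioc (0:ℝ) δ, |f t - f 0| ≤ η/8 := by
    intro t ht
    have htIcc : t ∈ Icc (0:ℝ) a := ⟨ht.1.le, ht.2.trans hδa⟩
    have : dist t 0 < δ0 := by
      rw [Real.dist_eq, sub_zero, abs_of_pos ht.1]
      exact lt_of_le_of_lt (ht.2.trans (min_le_left _ _)) (by linarith)
    have := hδ0 htIcc this
    rw [Real.dist_eq] at this
    exact this.le
  -- eventual bounds from N_tendsto
  have hmem : Ioo (0:ℝ) 2 ∈ 𝓝[<] (2:ℝ) := Ioo_mem_nhdsLT_of_mem ⟨by norm_num, le_refl _⟩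
  have hE1 := Metric.tendsto_nhds.mp (N_tendsto ha) (min (η/(8*(|f 0|+1))) 1)
    (lt_min (by positivity) one_pos)
  have hE2 := Metric.tendsto_nhds.mp ((N_tendsto ha).sub (N_tendsto hδpos))
    (η/(8*(2*B+1))) (by positivity)
  filter_upwards [hmem, hE1, hE2] with γ hγ h1 h2
  rw [Real.dist_eq] at h1 h2 ⊢
  norm_num at h2
  -- notation
  set w : ℝ → ℝ := fun t => Cc γ * t ^ (eps γ - 1) with hwdef
  set Na := Cc γ * a ^ (eps γ) / eps γ with hNadef
  set Nδ := Cc γ * δ ^ (eps γ) / eps γ with hNδdef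
  have hw_nonneg : ∀ t : ℝ, 0 < t → 0 ≤ w t := fun t ht =>
    mul_nonneg (Cc_nonneg γ) (Real.rpow_nonneg ht.le _)
  -- integrability
  have hwint_a : IntegrableOn w (Ioc (0:ℝ) a) volume := integrable_w hγ ha
  have hwint_δ : IntegrableOn w (Ioc (0:ℝ) δ) volume := integrable_w hγ hδpos
  have hwint_mid : IntegrableOn w (Ioc δ a) volume :=
    hwint_a.mono_set (Ioc_subset_Ioc_left hδpos.le)
  have hNa_eq : ∫ t in Ioc (0:ℝ) a, w t = Na := int_w hγ ha
  have hNδ_eq : ∫ t in Ioc (0:ℝ) δ, w t = Nδ := int_w hγ hδpos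
  have hfm : ∀ s : Set ℝ, s ⊆ Icc 0 a → MeasurableSet s →
      AEStronglyMeasurable (fun t => f t - f 0) (volume.restrict s) := fun s hs hms =>
    ((hf.mono hs).aestronglyMeasurable hms).sub aestronglyMeasurable_const
  have hbound : ∀ t ∈ Icc (0:ℝ) a, ‖f t - f 0‖ ≤ 2*B := by
    intro t ht
    have := hB t ht
    rw [Real.norm_eq_abs] at this ⊢
    calc |f t - f 0| ≤ |f t| + |f 0| := abs_sub _ _
      _ ≤ 2*B := by linarith
  have hg_int : ∀ s : Set ℝ, s ⊆ Icc 0 a → MeasurableSet s → IntegrableOn w s volume →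
      IntegrableOn (fun t => (f t - f 0) * w t) s volume := by
    intro s hs hms hwi
    apply hwi.bdd_mul (hfm s hs hms)
    rw [ae_restrict_iff' hms]
    exact ae_of_all _ fun t ht => hbound t (hs ht)
  have hIoc0δ_sub : Ioc (0:ℝ) δ ⊆ Icc 0 a := fun t ht => ⟨ht.1.le, ht.2.trans hδa⟩
  have hIocδa_sub : Ioc δ a ⊆ Icc 0 a := fun t ht => ⟨hδpos.le.trans ht.1.le, ht.2⟩
  have hIoc0a_sub : Ioc (0:ℝ) a ⊆ Icc 0 a := Ioc_subset_Icc_self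
  have hg_a := hg_int _ hIoc0a_sub measurableSet_Ioc hwint_a
  have hg_δ := hg_int _ hIoc0δ_sub measurableSet_Ioc hwint_δ
  have hg_mid := hg_int _ hIocδa_sub measurableSet_Ioc hwint_mid
  have hfw_a : IntegrableOn (fun t => f t * w t) (Ioc (0:ℝ) a) volume := by
    apply hwint_a.bdd_mul ((hf.mono hIoc0a_sub).aestronglyMeasurable measurableSet_Ioc)
    rw [ae_restrict_iff' measurableSet_Ioc]
    exact ae_of_all _ fun t ht => hB t (hIoc0a_sub ht)
  -- identity: ∫ g = ∫ f w - f 0 * Na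
  have hgid : ∫ t in Ioc (0:ℝ) a, (f t - f 0) * w t
      = (∫ t in Ioc (0:ℝ) a, f t * w t) - f 0 * Na := by
    have h1' : (fun t => (f t - f 0) * w t) = fun t => f t * w t - f 0 * w t := by
      funext t; ring
    rw [h1', integral_sub hfw_a (hwint_a.const_mul (f 0)), integral_const_mul, hNa_eq]
  -- splitting
  have hunion : Ioc (0:ℝ) δ ∪ Ioc δ a = Ioc (0:ℝ) a := Ioc_union_Ioc_eq_Ioc hδpos.le hδa
  have hsplitg : ∫ t in Ioc (0:ℝ) a, (f t - f 0) * w t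
      = (∫ t in Ioc (0:ℝ) δ, (f t - f 0) * w t) + ∫ t in Ioc δ a, (f t - f 0) * w t := by
    rw [← hunion, setIntegral_union (Ioc_disjoint_Ioc_of_le le_rfl) measurableSet_Ioc hg_δ hg_mid]
  have hsplitw : Na = Nδ + ∫ t in Ioc δ a, w t := by
    rw [← hNa_eq, ← hNδ_eq, ← hunion,
      setIntegral_union (Ioc_disjoint_Ioc_of_le le_rfl) measurableSet_Ioc hwint_δ hwint_mid]
  have hmid_nonneg : 0 ≤ ∫ t in Ioc δ a, w t :=
    setIntegral_nonneg measurableSet_Ioc fun t ht => hw_nonneg t (hδpos.trans ht.1)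
  have hNδ_nonneg : 0 ≤ Nδ := by
    rw [← hNδ_eq]
    exact setIntegral_nonneg measurableSet_Ioc fun t ht => hw_nonneg t ht.1
  have hNδNa : Nδ ≤ Na := by linarith [hmid_nonneg, hsplitw.ge]
  have hNa2 : Na ≤ 2 := by
    have := (abs_lt.mp (h1.trans_le (min_le_right _ _))).2
    linarith
  -- bound 1
  have hb1 : |∫ t in Ioc (0:ℝ) δ, (f t - f 0) * w t| ≤ (η/8) * Nδ := by
    calc |∫ t in Ioc (0:ℝ) δ, (f t - f 0) * w t|
        ≤ ∫ t in Ioc (0:ℝ) δ, |(f t - f 0) * w t| := by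
          simpa only [Real.norm_eq_abs] using norm_integral_le_integral_norm
            (μ := volume.restrict (Ioc (0:ℝ) δ)) (fun t => (f t - f 0) * w t)
      _ ≤ ∫ t in Ioc (0:ℝ) δ, (η/8) * w t := by
          apply setIntegral_mono_on hg_δ.abs (hwint_δ.const_mul (η/8)) measurableSet_Ioc
          intro t ht
          rw [abs_mul, abs_of_nonneg (hw_nonneg t ht.1)]
          exact mul_le_mul_of_nonneg_right (hsmall t ht) (hw_nonneg t ht.1)
      _ = (η/8) * Nδ := by rw [integral_const_mul, hNδ_eq]
  -- bound 2
  have hb2 : |∫ t in Ioc δ a, (f t - f 0) * w t| ≤ (2*B) * (Na - Nδ) := by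
    calc |∫ t in Ioc δ a, (f t - f 0) * w t|
        ≤ ∫ t in Ioc δ a, |(f t - f 0) * w t| := by
          simpa only [Real.norm_eq_abs] using norm_integral_le_integral_norm
            (μ := volume.restrict (Ioc δ a)) (fun t => (f t - f 0) * w t)
      _ ≤ ∫ t in Ioc δ a, (2*B) * w t := by
          apply setIntegral_mono_on hg_mid.abs (hwint_mid.const_mul (2*B)) measurableSet_Ioc
          intro t ht
          rw [abs_mul, abs_of_nonneg (hw_nonneg t (hδpos.trans ht.1))]
          refine mul_le_mul_of_nonneg_right ?_ (hw_nonneg t (hδpos.trans ht.1))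
          simpa [Real.norm_eq_abs] using hbound t (hIocδa_sub ht)
      _ = (2*B) * (Na - Nδ) := by
          rw [integral_const_mul]
          congr 1
          linarith [hsplitw]
  -- conclusion
  have hfinal : (∫ t in Ioc (0:ℝ) a, f t * w t) - f 0
      = ((∫ t in Ioc (0:ℝ) δ, (f t - f 0) * w t) + ∫ t in Ioc δ a, (f t - f 0) * w t)
        + f 0 * (Na - 1) := by
    rw [← hsplitg, hgid]; ring
  rw [hfinal]
  have habs : |((∫ t in Ioc (0:ℝ) δ, (f t - f 0) * w t) + ∫ t in Ioc δ a, (f t - f 0) * w t)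
      + f 0 * (Na - 1)|
      ≤ |∫ t in Ioc (0:ℝ) δ, (f t - f 0) * w t| + |∫ t in Ioc δ a, (f t - f 0) * w t|
        + |f 0| * |Na - 1| := by
    calc _ ≤ |(∫ t in Ioc (0:ℝ) δ, (f t - f 0) * w t) + ∫ t in Ioc δ a, (f t - f 0) * w t|
            + |f 0 * (Na - 1)| := abs_add_le _ _
      _ ≤ _ := by
          rw [abs_mul]
          exact add_le_add_left (abs_add_le _ _) _
  -- numeric bounds
  have hq1 : (η/8) * Nδ ≤ η/4 := by
    have h2' : Nδ ≤ 2 := hNδNa.trans hNa2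
    have h8 : (0:ℝ) ≤ η/8 := by positivity
    calc (η/8) * Nδ ≤ (η/8) * 2 := mul_le_mul_of_nonneg_left h2' h8
      _ = η/4 := by ring
  have hq2 : (2*B) * (Na - Nδ) ≤ η/8 := by
    have hlt : Na - Nδ < η/(8*(2*B+1)) := (abs_lt.mp h2).2
    have h2B : (0:ℝ) ≤ 2*B := by linarith
    calc (2*B) * (Na - Nδ) ≤ (2*B) * (η/(8*(2*B+1))) := mul_le_mul_of_nonneg_left hlt.le h2B
      _ ≤ η/8 := arith1 (2*B) η h2B hη
  have hq3 : |f 0| * |Na - 1| ≤ η/8 := by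
    have hlt : |Na - 1| ≤ η/(8*(|f 0|+1)) := (h1.trans_le (min_le_left _ _)).le
    calc |f 0| * |Na - 1| ≤ |f 0| * (η/(8*(|f 0|+1))) :=
          mul_le_mul_of_nonneg_left hlt (abs_nonneg (f 0))
      _ ≤ η/8 := arith1 (|f 0|) η (abs_nonneg _) hη
  calc |((∫ t in Ioc (0:ℝ) δ, (f t - f 0) * w t) + ∫ t in Ioc δ a, (f t - f 0) * w t)
      + f 0 * (Na - 1)| ≤ _ := habs
    _ ≤ η/4 + η/8 + η/8 :=
        add_le_add (add_le_add (hb1.trans hq1) (hb2.trans hq2)) hq3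
    _ < η := by linarith


/-- The 1D energy measures (φ_γ')² + W_γ(φ_γ) dt converge weakly to the Dirac
delta at 0 as γ → 2⁻. -/
theorem stmt16 (a : ℝ) (ha : 0 < a) (f : ℝ → ℝ) (hf : ContinuousOn f (Icc 0 a)) :
    Tendsto (fun γ : ℝ =>
        ∫ t in (0:ℝ)..a, f t * ((deriv (phi1D γ) t) ^ 2 + Wpot γ (phi1D γ t)))
      (𝓝[<] 2) (𝓝 (f 0)) := by
  have hmem : Ioo (0:ℝ) 2 ∈ 𝓝[<] (2:ℝ) := Ioo_mem_nhdsLT_of_mem ⟨by norm_num, le_refl _⟩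
  apply (main_est a ha f hf).congr'
  filter_upwards [hmem] with γ hγ
  rw [intervalIntegral.integral_of_le ha.le]
  refine (setIntegral_congr_fun measurableSet_Ioc fun t ht => ?_).symm
  rw [density hγ ht.1]
end

section
/- For every μ ∈ (0,1) and every δ ∈ (0,1) there exists ε_0 > 0 such that the following holds: if a : [1/2,1] → [0,∞) is nondecreasing, a(1) ≤ ε_0, and for every r ∈ [1/2,1] such that t := a(r)^μ > 0 and r − 2t ≥ 1/2 one has a(r−2t)^{1−δ} ≤ (a(r) − a(r−2t))/(2t), then a(1/2) = 0. -/
open MeasureTheory Metric Set Filter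
open scoped ENNReal NNReal Topology

noncomputable def iterSeq (a : ℝ → ℝ) (μ : ℝ) : ℕ → ℝ
  | 0 => 1
  | n + 1 =>
      if 1/2 ≤ iterSeq a μ n - 2 * a (iterSeq a μ n) ^ μ
      then iterSeq a μ n - 2 * a (iterSeq a μ n) ^ μ else iterSeq a μ n

lemma drop_aux {θ μ δ x y : ℝ} (hθ0 : 0 < θ) (hθμ : θ ≤ μ) (hθδ : θ ≤ δ)
    (hδ1 : δ < 1) (hy : 0 < y) (hyx : y ≤ x) (hx1 : x ≤ 1)
    (h : 2 * x ^ μ * y ^ (1 - δ) ≤ x - y) :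
    min θ (1 - 2 ^ (-θ)) * x ^ μ ≤ x ^ θ - y ^ θ := by
  have hx : 0 < x := hy.trans_le hyx
  have hxμ : (0:ℝ) < x ^ μ := Real.rpow_pos_of_pos hx μ
  have h2θ : (2:ℝ) ^ (-θ) < 1 :=
    Real.rpow_lt_one_of_one_lt_of_neg (by norm_num) (by linarith)
  by_cases hc : x / 2 ≤ y
  · have hθ1 : θ < 1 := hθδ.trans_lt hδ1
    have hw : y ^ θ * x ^ (1 - θ) ≤ θ * y + (1 - θ) * x :=
      Real.geom_mean_le_arith_mean2_weighted hθ0.le (by linarith) hy.le hx.le (by ring)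
    have hxsplit : x ^ θ * x ^ (1 - θ) = x := by
      rw [← Real.rpow_add hx]; norm_num
    have key : θ * (x - y) ≤ (x ^ θ - y ^ θ) * x ^ (1 - θ) := by
      have e : (x ^ θ - y ^ θ) * x ^ (1 - θ) = x - y ^ θ * x ^ (1 - θ) := by
        rw [sub_mul, hxsplit]
      rw [e]; linarith
    have hy' : (x / 2) ^ (1 - δ) ≤ y ^ (1 - δ) :=
      Real.rpow_le_rpow (by positivity) hc (by linarith)
    have hstep : 2 * x ^ μ * (x / 2) ^ (1 - δ) ≤ x - y :=
      le_trans (by nlinarith) h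
    -- x^(1-θ) ≤ 2 * (x/2)^(1-δ)
    have hx2 : (x / 2) ^ (1 - δ) = x ^ (1 - δ) / 2 ^ (1 - δ) :=
      Real.div_rpow hx.le (by norm_num : (0:ℝ) ≤ 2) (1 - δ)
    have h2d : (2:ℝ) ^ (1 - δ) ≤ 2 := by
      have := Real.rpow_le_rpow_of_exponent_le (by norm_num : (1:ℝ) ≤ 2)
        (by linarith : 1 - δ ≤ 1)
      simpa using this
    have h2dpos : (0:ℝ) < (2:ℝ) ^ (1 - δ) := Real.rpow_pos_of_pos (by norm_num) _
    have hxe : x ^ (1 - θ) ≤ x ^ (1 - δ) :=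
      Real.rpow_le_rpow_of_exponent_ge hx hx1 (by linarith)
    have hbound : x ^ (1 - θ) ≤ 2 * (x / 2) ^ (1 - δ) := by
      rw [hx2]
      have hxd : (0:ℝ) ≤ x ^ (1 - δ) := (Real.rpow_pos_of_pos hx _).le
      have : x ^ (1 - δ) ≤ 2 * (x ^ (1 - δ) / 2 ^ (1 - δ)) := by
        rw [mul_div_assoc', le_div_iff₀ h2dpos]
        nlinarith
      linarith
    have hmain : θ * x ^ μ * x ^ (1 - θ) ≤ (x ^ θ - y ^ θ) * x ^ (1 - θ) := by
      have c1 : θ * x ^ μ * x ^ (1 - θ) ≤ θ * (2 * x ^ μ * (x / 2) ^ (1 - δ)) := by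
        have := mul_le_mul_of_nonneg_left hbound (mul_pos hθ0 hxμ).le
        calc θ * x ^ μ * x ^ (1 - θ) ≤ θ * x ^ μ * (2 * (x/2) ^ (1-δ)) := by
              exact mul_le_mul_of_nonneg_left hbound (by positivity)
          _ = θ * (2 * x ^ μ * (x/2) ^ (1-δ)) := by ring
      have c2 : θ * (2 * x ^ μ * (x / 2) ^ (1 - δ)) ≤ θ * (x - y) :=
        mul_le_mul_of_nonneg_left hstep hθ0.le
      exact le_trans (le_trans c1 c2) key
    have hfin : θ * x ^ μ ≤ x ^ θ - y ^ θ :=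
      le_of_mul_le_mul_right hmain (Real.rpow_pos_of_pos hx _)
    calc min θ (1 - 2 ^ (-θ)) * x ^ μ ≤ θ * x ^ μ :=
          mul_le_mul_of_nonneg_right (min_le_left _ _) hxμ.le
      _ ≤ x ^ θ - y ^ θ := hfin
  · push_neg at hc
    have h1 : y ^ θ ≤ (x / 2) ^ θ := Real.rpow_le_rpow hy.le hc.le hθ0.le
    have h2 : (x / 2) ^ θ = x ^ θ * 2 ^ (-θ) := by
      rw [Real.div_rpow hx.le (by norm_num : (0:ℝ) ≤ 2) θ,
        Real.rpow_neg (by norm_num : (0:ℝ) ≤ 2), div_eq_mul_inv]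
    have h3 : x ^ μ ≤ x ^ θ := Real.rpow_le_rpow_of_exponent_ge hx hx1 hθμ
    have h4 : min θ (1 - 2 ^ (-θ)) ≤ 1 - 2 ^ (-θ) := min_le_right _ _
    have h5 : (0:ℝ) < 2 ^ (-θ) := Real.rpow_pos_of_pos (by norm_num) _
    nlinarith [hxμ.le, Real.rpow_pos_of_pos hx θ]

/-- The discrete differential inequality iteration. -/
theorem stmt17 (μ δ : ℝ) (hμ : μ ∈ Ioo (0:ℝ) 1) (hδ : δ ∈ Ioo (0:ℝ) 1) :
    ∃ ε₀ : ℝ, 0 < ε₀ ∧ ∀ a : ℝ → ℝ,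
      (∀ r ∈ Icc (1/2 : ℝ) 1, 0 ≤ a r) → MonotoneOn a (Icc (1/2 : ℝ) 1) →
      a 1 ≤ ε₀ →
      (∀ r ∈ Icc (1/2 : ℝ) 1, 0 < a r ^ μ → 1/2 ≤ r - 2 * a r ^ μ →
        a (r - 2 * a r ^ μ) ^ (1 - δ) ≤ (a r - a (r - 2 * a r ^ μ)) / (2 * a r ^ μ)) →
      a (1/2) = 0 := by
  obtain ⟨hμ0, hμ1⟩ := hμ
  obtain ⟨hδ0, hδ1⟩ := hδ
  set θ : ℝ := min μ δ with hθdef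
  have hθ0 : 0 < θ := lt_min hμ0 hδ0
  have hθμ : θ ≤ μ := min_le_left _ _
  have hθδ : θ ≤ δ := min_le_right _ _
  have h2θ : (2:ℝ) ^ (-θ) < 1 :=
    Real.rpow_lt_one_of_one_lt_of_neg (by norm_num) (by linarith)
  set K : ℝ := min θ (1 - 2 ^ (-θ)) with hKdef
  have hK0 : 0 < K := lt_min hθ0 (by linarith)
  set C : ℝ := K / 2 with hCdef
  have hC0 : 0 < C := by positivity
  set ε₀ : ℝ := min ((C/8) ^ (1/θ)) (min ((1/16 : ℝ) ^ (1/μ)) 1) with hεdef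
  have hε0 : 0 < ε₀ :=
    lt_min (Real.rpow_pos_of_pos (by positivity) _)
      (lt_min (Real.rpow_pos_of_pos (by norm_num) _) one_pos)
  have hε1 : ε₀ ≤ 1 := le_trans (min_le_right _ _) (min_le_right _ _)
  have hεθ : ε₀ ^ θ ≤ C / 8 := by
    have h1 : ε₀ ^ θ ≤ ((C/8) ^ (1/θ)) ^ θ :=
      Real.rpow_le_rpow hε0.le (min_le_left _ _) hθ0.le
    rwa [← Real.rpow_mul (by positivity : (0:ℝ) ≤ C/8),
      one_div_mul_cancel hθ0.ne', Real.rpow_one] at h1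
  have hεμ : ε₀ ^ μ ≤ 1 / 16 := by
    have h1 : ε₀ ^ μ ≤ ((1/16 : ℝ) ^ (1/μ)) ^ μ :=
      Real.rpow_le_rpow hε0.le (le_trans (min_le_right _ _) (min_le_left _ _)) hμ0.le
    rwa [← Real.rpow_mul (by norm_num : (0:ℝ) ≤ 1/16),
      one_div_mul_cancel hμ0.ne', Real.rpow_one] at h1
  refine ⟨ε₀, hε0, fun a ha0 hmono ha1 hineq => ?_⟩
  by_contra hne
  have h1mem : (1:ℝ) ∈ Icc (1/2 : ℝ) 1 := ⟨by norm_num, le_refl 1⟩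
  have hhalf : (1/2:ℝ) ∈ Icc (1/2 : ℝ) 1 := ⟨le_refl _, by norm_num⟩
  have hc0 : 0 < a (1/2) := lt_of_le_of_ne (ha0 _ hhalf) (Ne.symm hne)
  set c : ℝ := a (1/2) with hcdef
  set R : ℕ → ℝ := iterSeq a μ with hRdef
  have hR0 : R 0 = 1 := rfl
  have hRs : ∀ n, R (n+1) =
      if 1/2 ≤ R n - 2 * a (R n) ^ μ then R n - 2 * a (R n) ^ μ else R n :=
    fun n => rfl
  have hmem : ∀ n, R n ∈ Icc (1/2 : ℝ) 1 := by
    intro n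
    induction n with
    | zero => exact h1mem
    | succ n ih =>
      rw [hRs n]
      split_ifs with h
      · constructor
        · exact h
        · have : (0:ℝ) ≤ 2 * a (R n) ^ μ := by
            have := ha0 _ ih
            positivity
          linarith [ih.2]
      · exact ih
  have hdec : ∀ n, R (n+1) ≤ R n := by
    intro n
    rw [hRs n]
    split_ifs with h
    · have : (0:ℝ) ≤ 2 * a (R n) ^ μ := by
        have := ha0 _ (hmem n); positivity
      linarith
    · exact le_refl _
  have haR : ∀ n, a (R n) ≤ ε₀ := fun n =>
    le_trans (hmono (hmem n) h1mem (hmem n).2) ha1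
  have hcR : ∀ n, c ≤ a (R n) := fun n => hmono hhalf (hmem n) (hmem n).1
  have hdrop : ∀ n, C * (R n - R (n+1)) ≤ a (R n) ^ θ - a (R (n+1)) ^ θ := by
    intro n
    rw [hRs n]
    split_ifs with h
    · set x : ℝ := a (R n) with hxdef
      have hx0 : 0 < x := lt_of_lt_of_le hc0 (hcR n)
      have hxμ : 0 < x ^ μ := Real.rpow_pos_of_pos hx0 μ
      have hmem' : R n - 2 * x ^ μ ∈ Icc (1/2 : ℝ) 1 := by
        refine ⟨h, ?_⟩
        have : (0:ℝ) ≤ 2 * x ^ μ := by positivity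
        linarith [(hmem n).2]
      set y : ℝ := a (R n - 2 * x ^ μ) with hydef
      have hy0 : 0 < y := lt_of_lt_of_le hc0 (hmono hhalf hmem' hmem'.1)
      have hyx : y ≤ x := hmono hmem' (hmem n) (by nlinarith)
      have hx1 : x ≤ 1 := le_trans (haR n) hε1
      have hkey := hineq (R n) (hmem n) hxμ h
      have hkey2 : 2 * x ^ μ * y ^ (1 - δ) ≤ x - y := by
        rw [le_div_iff₀ (by positivity : (0:ℝ) < 2 * x ^ μ)] at hkey
        linarith [hkey]
      have := drop_aux hθ0 hθμ hθδ hδ1 hy0 hyx hx1 hkey2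
      have heq : C * (R n - (R n - 2 * x ^ μ)) = K * x ^ μ := by
        rw [hCdef]; ring
      rw [heq]
      exact this
    · simp
  have htel : ∀ n, C * (1 - R n) ≤ a 1 ^ θ - a (R n) ^ θ := by
    intro n
    induction n with
    | zero => rw [hR0]; simp
    | succ n ih =>
      have := hdrop n
      have e1 : a (R 0) = a 1 := by rw [hR0]
      nlinarith [this, ih]
  by_cases hst : ∃ n, ¬ (1/2 ≤ R n - 2 * a (R n) ^ μ)
  · obtain ⟨n, hn⟩ := hst
    push_neg at hn
    have haμ : a (R n) ^ μ ≤ ε₀ ^ μ :=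
      Real.rpow_le_rpow (ha0 _ (hmem n)) (haR n) hμ0.le
    have hRn : R n < 1/2 + 2 * (1/16) := by
      have : a (R n) ^ μ ≤ 1/16 := le_trans haμ hεμ
      linarith
    have ht := htel n
    have h1θ : a 1 ^ θ ≤ ε₀ ^ θ := Real.rpow_le_rpow (ha0 _ h1mem) ha1 hθ0.le
    have hRθ : (0:ℝ) ≤ a (R n) ^ θ := Real.rpow_nonneg (ha0 _ (hmem n)) θ
    nlinarith [ht, h1θ, hRθ, hεθ, hC0, hRn]
  · push_neg at hst
    have hcμ : (0:ℝ) < c ^ μ := Real.rpow_pos_of_pos hc0 μ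
    have hstep : ∀ n, R (n+1) ≤ R n - 2 * c ^ μ := by
      intro n
      rw [hRs n, if_pos (hst n)]
      have : c ^ μ ≤ a (R n) ^ μ := Real.rpow_le_rpow hc0.le (hcR n) hμ0.le
      linarith
    have hlin : ∀ n : ℕ, R n ≤ 1 - n * (2 * c ^ μ) := by
      intro n
      induction n with
      | zero => simp [hR0]
      | succ n ih =>
        have := hstep n
        push_cast
        push_cast at ih
        linarith
    obtain ⟨n, hn⟩ := exists_nat_gt ((1/2) / (2 * c ^ μ))
    have h2cμ : (0:ℝ) < 2 * c ^ μ := by positivity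
    have : (1/2 : ℝ) < n * (2 * c ^ μ) := by
      rw [div_lt_iff₀ h2cμ] at hn
      linarith
    have := hlin n
    linarith [(hmem n).1]
end

section
/- Let Ω ⊂ ℝⁿ be a bounded open set, let M > 0, let γ_k ∈ (0,2) with γ_k → 2, and let u_k : Ω → [0,∞) be measurable functions with ∫_Ω u_k² dx ≤ M and ∫_Ω W_{γ_k}(u_k) dx ≤ M for all k. If u_k^{1−γ_k/2} → g in L¹(Ω) for some g ∈ L¹(Ω), then there exists a measurable set A ⊂ Ω such that g = χ_A a.e. in Ω; moreover χ_{{u_k>0}} → χ_A in L¹(Ω). -/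
open MeasureTheory Metric Set Filter
open scoped ENNReal NNReal Topology

section Aux

lemma aux_rpow_div_sq {r : ℝ} (hr : 1 < r) :
    Tendsto (fun t : ℝ => r ^ t / t ^ 2) atTop atTop := by
  have hlr : 0 < Real.log r := Real.log_pos hr
  have h1 : Tendsto (fun s : ℝ => Real.exp s / s ^ 2) atTop atTop :=
    Real.tendsto_exp_div_pow_atTop 2
  have h2 : Tendsto (fun t : ℝ => t * Real.log r) atTop atTop :=
    Tendsto.atTop_mul_const hlr tendsto_id
  have h3 := (h1.comp h2).const_mul_atTop (show (0:ℝ) < (Real.log r)^2 by positivity)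
  refine h3.congr' ?_
  filter_upwards [eventually_gt_atTop 0] with t ht
  have : r ^ t = Real.exp (t * Real.log r) := by
    rw [Real.rpow_def_of_pos (by linarith : (0:ℝ) < r), mul_comm]
  rw [this]
  simp only [Function.comp_apply]
  field_simp

lemma aux_inv_tendsto : Tendsto (fun a : ℝ => 1 / a) (𝓝[>] (0:ℝ)) atTop := by
  simpa using tendsto_inv_nhdsGT_zero

lemma aux_sq_rpow_inv {r : ℝ} (hr : 1 < r) :
    Tendsto (fun a : ℝ => a ^ 2 * r ^ (1 / a)) (𝓝[>] (0:ℝ)) atTop := by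
  have h := (aux_rpow_div_sq hr).comp aux_inv_tendsto
  refine h.congr' ?_
  filter_upwards [self_mem_nhdsWithin] with a (ha : 0 < a)
  simp only [Function.comp_apply]
  rw [div_pow, one_pow]
  rw [div_div_eq_mul_div, div_one]
  ring

lemma aux_rpow_tendsto_atTop {r : ℝ} (hr : 1 < r) :
    Tendsto (fun t : ℝ => r ^ t) atTop atTop := by
  have hlr : 0 < Real.log r := Real.log_pos hr
  have h2 : Tendsto (fun t : ℝ => t * Real.log r) atTop atTop :=
    Tendsto.atTop_mul_const hlr tendsto_id
  have := Real.tendsto_exp_atTop.comp h2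
  refine this.congr fun t => ?_
  simp only [Function.comp_apply]
  rw [Real.rpow_def_of_pos (by linarith : (0:ℝ) < r), mul_comm]

lemma aux_rpow_inv {r : ℝ} (hr : 1 < r) :
    Tendsto (fun a : ℝ => r ^ (1 / a)) (𝓝[>] (0:ℝ)) atTop :=
  (aux_rpow_tendsto_atTop hr).comp aux_inv_tendsto

lemma aux_ofReal_div_tendsto_zero {M : ℝ} {L : ℕ → ℝ} (hL : Tendsto L atTop atTop) :
    Tendsto (fun k => ENNReal.ofReal M / ENNReal.ofReal (L k)) atTop (𝓝 0) := by
  have h : Tendsto (fun k => M / L k) atTop (𝓝 0) := Tendsto.div_atTop tendsto_const_nhds hL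
  have h2 : Tendsto (fun k => ENNReal.ofReal (M / L k)) atTop (𝓝 0) := by
    simpa [Function.comp_def] using (ENNReal.continuous_ofReal.tendsto 0).comp h
  refine h2.congr' ?_
  filter_upwards [hL.eventually (eventually_gt_atTop 0)] with k hk
  rw [ENNReal.ofReal_div_of_pos hk]

/-- The key degenerate-potential lower bound tends to infinity. -/
lemma aux_L_tendsto {δ : ℝ} (hδ0 : 0 < δ) (hδ1 : δ < 1) {γ α : ℕ → ℝ}
    (hγ : ∀ k, γ k ∈ Set.Ioo (0:ℝ) 2) (hαdef : ∀ k, α k = 1 - γ k / 2)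
    (hαlim : Tendsto α atTop (𝓝[>] (0:ℝ))) :
    Tendsto (fun k => ((2 - γ k) ^ 2 / 16) * (1 - δ) ^ (-(γ k) / α k)) atTop atTop := by
  have h1δ : (0:ℝ) < 1 - δ := by linarith
  have hr : 1 < ((1 - δ) ^ 2)⁻¹ := by
    rw [one_lt_inv_iff₀]
    constructor
    · positivity
    · nlinarith
  have h := ((aux_sq_rpow_inv hr).comp hαlim).const_mul_atTop
    (show (0:ℝ) < (1 - δ) ^ 2 / 4 by positivity)
  refine h.congr fun k => ?_
  simp only [Function.comp_apply]
  have hαk : 0 < α k := by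
    rw [hαdef k]
    have := (hγ k).2
    linarith
  have hγk : γ k = 2 - 2 * α k := by rw [hαdef k]; ring
  have e1 : (((1 - δ) ^ 2)⁻¹ : ℝ) ^ (1 / α k) = (1 - δ) ^ (-(2 / α k)) := by
    rw [← Real.rpow_natCast (1 - δ) 2, ← Real.rpow_neg h1δ.le, ← Real.rpow_mul h1δ.le]
    congr 1
    push_cast
    ring
  have e2 : (1 - δ) ^ (-(γ k) / α k) = (1 - δ) ^ (2:ℝ) * (1 - δ) ^ (-(2 / α k)) := by
    rw [← Real.rpow_add h1δ]
    congr 1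
    rw [hγk]
    field_simp
    ring
  rw [e2, e1, Real.rpow_two, hγk]
  ring

/-- If `f k ≤ a k + δ * C + b k` with `a b → 0` for every small `δ`, then `f → 0`. -/
lemma aux_tendsto_zero_of_bound {C : ℝ≥0∞} (hC : C ≠ ∞) {f : ℕ → ℝ≥0∞}
    (h : ∀ δ : ℝ, 0 < δ → δ < 1 → ∃ a b : ℕ → ℝ≥0∞,
      Tendsto a atTop (𝓝 0) ∧ Tendsto b atTop (𝓝 0) ∧
      ∀ k, f k ≤ a k + ENNReal.ofReal δ * C + b k) :
    Tendsto f atTop (𝓝 0) := by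
  rw [ENNReal.tendsto_atTop_zero]
  intro ε hε
  set m := min ε 1 with hm
  have hm0 : (0:ℝ≥0∞) < m := lt_min hε zero_lt_one
  have hmtop : m ≠ ∞ := (lt_of_le_of_lt (min_le_right _ _) (by norm_num)).ne
  have hm3 : (0:ℝ≥0∞) < m / 3 := ENNReal.div_pos hm0.ne' (by norm_num)
  -- choose δ
  have hmul : Tendsto (fun δ : ℝ => ENNReal.ofReal δ * C) (𝓝[>] (0:ℝ)) (𝓝 0) := by
    have h0 : Tendsto (fun δ : ℝ => ENNReal.ofReal δ) (𝓝[>] (0:ℝ)) (𝓝 0) := by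
      have := (ENNReal.continuous_ofReal.tendsto 0).mono_left
        (nhdsWithin_le_nhds : 𝓝[>] (0:ℝ) ≤ 𝓝 0)
      simpa using this
    have := ENNReal.Tendsto.mul_const h0 (Or.inr hC)
    simpa using this
  obtain ⟨δ, hδ3, hδ1, hδ0⟩ : ∃ δ : ℝ, ENNReal.ofReal δ * C ≤ m / 3 ∧ δ < 1 ∧ 0 < δ := by
    have h1 : ∀ᶠ δ : ℝ in 𝓝[>] 0, ENNReal.ofReal δ * C ≤ m / 3 :=
      Filter.Tendsto.eventually_le_const hm3 hmul
    have h2 : ∀ᶠ δ : ℝ in 𝓝[>] 0, δ < 1 :=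
      (eventually_lt_nhds zero_lt_one).filter_mono nhdsWithin_le_nhds
    have h3 : ∀ᶠ δ : ℝ in 𝓝[>] 0, 0 < δ := eventually_mem_nhdsWithin
    exact ((h1.and (h2.and h3)).exists).imp fun δ h => ⟨h.1, h.2.1, h.2.2⟩
  obtain ⟨a, b, ha, hb, hbd⟩ := h δ hδ0 hδ1
  obtain ⟨N1, hN1⟩ := ENNReal.tendsto_atTop_zero.mp ha (m / 3) hm3
  obtain ⟨N2, hN2⟩ := ENNReal.tendsto_atTop_zero.mp hb (m / 3) hm3
  refine ⟨max N1 N2, fun k hk => ?_⟩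
  have : f k ≤ m / 3 + m / 3 + m / 3 := by
    refine (hbd k).trans ?_
    gcongr
    · exact hN1 k (le_trans (le_max_left _ _) hk)
    · exact hN2 k (le_trans (le_max_right _ _) hk)
  calc f k ≤ m / 3 + m / 3 + m / 3 := this
    _ = m := ENNReal.add_thirds m
    _ ≤ ε := min_le_left _ _

end Aux

/-- L¹ limits of u_k^(1-γ_k/2) under uniform L² and potential-energy bounds
are characteristic functions, and the positivity sets converge to the same set. -/
theorem stmt18 (n : ℕ) (hn : 1 ≤ n) (Ω : Set (EuclideanSpace ℝ (Fin n)))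
    (hΩ : IsOpen Ω) (hΩb : Bornology.IsBounded Ω) (M : ℝ) (hM : 0 < M)
    (γ : ℕ → ℝ) (hγ : ∀ k, γ k ∈ Ioo (0:ℝ) 2) (hγ2 : Tendsto γ atTop (𝓝 2))
    (u : ℕ → EuclideanSpace ℝ (Fin n) → ℝ) (hmeas : ∀ k, Measurable (u k))
    (hu0 : ∀ k x, 0 ≤ u k x)
    (hL2bd : ∀ k, ∫⁻ x in Ω, ENNReal.ofReal ((u k x) ^ 2) ≤ ENNReal.ofReal M)
    (hWbd : ∀ k, ∫⁻ x in Ω, ENNReal.ofReal (Wpot (γ k) (u k x)) ≤ ENNReal.ofReal M)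
    (g : EuclideanSpace ℝ (Fin n) → ℝ) (hg : Integrable g (volume.restrict Ω))
    (hL1 : Tendsto (fun k =>
        eLpNorm (fun x => u k x ^ (1 - γ k / 2) - g x) 1 (volume.restrict Ω))
      atTop (𝓝 0)) :
    ∃ A : Set (EuclideanSpace ℝ (Fin n)), MeasurableSet A ∧ A ⊆ Ω ∧
      (∀ᵐ x ∂volume.restrict Ω, g x = A.indicator (fun _ => (1:ℝ)) x) ∧
      Tendsto (fun k =>
          eLpNorm (fun x => {y | 0 < u k y}.indicator (fun _ => (1:ℝ)) x -
              A.indicator (fun _ => (1:ℝ)) x) 1 (volume.restrict Ω))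
        atTop (𝓝 0) := by
  have hΩm : MeasurableSet Ω := hΩ.measurableSet
  set μ : Measure (EuclideanSpace ℝ (Fin n)) := volume.restrict Ω with hμdef
  have hμfin : μ univ ≠ ∞ := by
    rw [hμdef, Measure.restrict_apply_univ]
    exact hΩb.measure_lt_top.ne
  set α : ℕ → ℝ := fun k => 1 - γ k / 2 with hαdef
  have hα0 : ∀ k, 0 < α k := by
    intro k; have := (hγ k).2; simp only [hαdef]; linarith
  have hα1 : ∀ k, α k ≤ 1 := by
    intro k; have := (hγ k).1; simp only [hαdef]; linarith
  have hαlim : Tendsto α atTop (𝓝[>] (0:ℝ)) := by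
    rw [tendsto_nhdsWithin_iff]
    constructor
    · have : Tendsto (fun k => 1 - γ k / 2) atTop (𝓝 (1 - 2 / 2)) :=
        tendsto_const_nhds.sub (hγ2.div_const 2)
      rw [hαdef]
      simpa using this
    · exact Eventually.of_forall fun k => hα0 k
  set v : ℕ → EuclideanSpace ℝ (Fin n) → ℝ := fun k x => u k x ^ α k with hvdef
  have hvmeas : ∀ k, Measurable (v k) := by
    intro k
    rw [hvdef]
    fun_prop (disch := exact hmeas k)
  have hv0 : ∀ k x, 0 ≤ v k x := fun k x => Real.rpow_nonneg (hu0 k x) _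
  have hv_zero : ∀ k x, u k x = 0 → v k x = 0 := by
    intro k x h
    simp only [hvdef, h]
    exact Real.zero_rpow (hα0 k).ne'
  -- `v` recovers `u` via the inverse power
  have hv_inv : ∀ k x, (v k x) ^ (1 / α k) = u k x := by
    intro k x
    simp only [hvdef]
    rw [← Real.rpow_mul (hu0 k x), mul_one_div, div_self (hα0 k).ne', Real.rpow_one]
  -- rewrite the L¹ convergence hypothesis
  have hL1' : Tendsto (fun k => ∫⁻ x, ENNReal.ofReal |v k x - g x| ∂μ) atTop (𝓝 0) := by
    refine hL1.congr fun k => ?_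
    rw [eLpNorm_one_eq_lintegral_enorm]
    refine lintegral_congr fun x => ?_
    rw [← Real.enorm_eq_ofReal_abs]
  have hgae : AEMeasurable g μ := hg.aemeasurable
  -- Chebyshev bound from the L¹ convergence
  have hclose : ∀ ε : ℝ, 0 < ε →
      Tendsto (fun k => μ {x | ε ≤ |v k x - g x|}) atTop (𝓝 0) := by
    intro ε hε
    have hbd : ∀ k, μ {x | ε ≤ |v k x - g x|} ≤
        (∫⁻ x, ENNReal.ofReal |v k x - g x| ∂μ) * (ENNReal.ofReal ε)⁻¹ := by
      intro k
      have hmono : {x | ε ≤ |v k x - g x|} ⊆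
          {x | ENNReal.ofReal ε ≤ ENNReal.ofReal |v k x - g x|} :=
        fun x hx => ENNReal.ofReal_le_ofReal hx
      refine (measure_mono hmono).trans ?_
      rw [← div_eq_mul_inv]
      refine meas_ge_le_lintegral_div ?_ (ENNReal.ofReal_pos.mpr hε).ne' ENNReal.ofReal_ne_top
      exact (continuous_abs.measurable.comp_aemeasurable ((hvmeas k).aemeasurable.sub hgae)).ennreal_ofReal
    have hlim : Tendsto (fun k => (∫⁻ x, ENNReal.ofReal |v k x - g x| ∂μ) *
        (ENNReal.ofReal ε)⁻¹) atTop (𝓝 0) := by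
      have := ENNReal.Tendsto.mul_const hL1'
        (Or.inr (ENNReal.inv_ne_top.mpr (ENNReal.ofReal_pos.mpr hε).ne'))
      simpa using this
    exact tendsto_of_tendsto_of_tendsto_of_le_of_le tendsto_const_nhds hlim
      (fun k => zero_le) hbd
  -- measurability of the potential term
  have hWmeasf : ∀ k, Measurable fun x => ENNReal.ofReal (Wpot (γ k) (u k x)) := by
    intro k
    apply Measurable.ennreal_ofReal
    have hW : Measurable (Wpot (γ k)) := by
      unfold Wpot
      exact Measurable.ite (measurableSet_lt measurable_const measurable_id)
        (by fun_prop) measurable_const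
    exact hW.comp (hmeas k)
  -- Chebyshev bound for the middle set
  have hmidbd : ∀ δ : ℝ, 0 < δ → δ < 1 → ∀ k,
      μ {x | 0 < u k x ∧ v k x ≤ 1 - δ} ≤
        ENNReal.ofReal M / ENNReal.ofReal (((2 - γ k) ^ 2 / 16) * (1 - δ) ^ (-(γ k) / α k)) := by
    intro δ hδ0 hδ1 k
    set L := ((2 - γ k) ^ 2 / 16) * (1 - δ) ^ (-(γ k) / α k) with hLdef
    have h1δ : (0:ℝ) < 1 - δ := by linarith
    have h2γ : (0:ℝ) < 2 - γ k := by have := (hγ k).2; linarith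
    have hc : (0:ℝ) < (2 - γ k) ^ 2 / 16 := by positivity
    have hLpos : 0 < L := mul_pos hc (Real.rpow_pos_of_pos h1δ _)
    have hsub : {x | 0 < u k x ∧ v k x ≤ 1 - δ} ⊆
        {x | ENNReal.ofReal L ≤ ENNReal.ofReal (Wpot (γ k) (u k x))} := by
      rintro x ⟨hux, hvx⟩
      have hu_le : u k x ≤ (1 - δ) ^ (1 / α k) := by
        have h := Real.rpow_le_rpow (Real.rpow_nonneg (hu0 k x) _) hvx
          (le_of_lt (one_div_pos.mpr (hα0 k)))
        rwa [hv_inv] at h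
      have key : L ≤ Wpot (γ k) (u k x) := by
        rw [Wpot, if_pos hux, hLdef]
        refine mul_le_mul_of_nonneg_left ?_ hc.le
        calc (1 - δ) ^ (-(γ k) / α k) = ((1 - δ) ^ (1 / α k)) ^ (-(γ k)) := by
              rw [← Real.rpow_mul h1δ.le]
              congr 1
              ring
        _ ≤ (u k x) ^ (-(γ k)) :=
              Real.rpow_le_rpow_of_nonpos hux hu_le (neg_nonpos.mpr (hγ k).1.le)
      exact ENNReal.ofReal_le_ofReal key
    refine (measure_mono hsub).trans ?_
    refine (meas_ge_le_lintegral_div (hWmeasf k).aemeasurable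
      (ENNReal.ofReal_pos.mpr hLpos).ne' ENNReal.ofReal_ne_top).trans ?_
    exact ENNReal.div_le_div_right (hWbd k) _
  -- Chebyshev bound for the top set
  have htopbd : ∀ δ : ℝ, 0 < δ → ∀ k,
      μ {x | 1 + δ ≤ v k x} ≤ ENNReal.ofReal M / ENNReal.ofReal ((1 + δ) ^ ((2:ℝ) / α k)) := by
    intro δ hδ0 k
    have hTpos : (0:ℝ) < (1 + δ) ^ ((2:ℝ) / α k) := Real.rpow_pos_of_pos (by linarith) _
    have hsub : {x | 1 + δ ≤ v k x} ⊆
        {x | ENNReal.ofReal ((1 + δ) ^ ((2:ℝ) / α k)) ≤ ENNReal.ofReal ((u k x) ^ 2)} := by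
      intro x hx
      have hu_ge : (1 + δ) ^ (1 / α k) ≤ u k x := by
        have h := Real.rpow_le_rpow (by linarith : (0:ℝ) ≤ 1 + δ) hx
          (le_of_lt (one_div_pos.mpr (hα0 k)))
        rwa [hv_inv] at h
      apply ENNReal.ofReal_le_ofReal
      have he : (1 + δ) ^ ((2:ℝ) / α k) = ((1 + δ) ^ (1 / α k)) ^ 2 := by
        rw [← Real.rpow_natCast ((1 + δ) ^ (1 / α k)) 2,
          ← Real.rpow_mul (by linarith : (0:ℝ) ≤ 1 + δ)]
        congr 1
        push_cast
        ring
      rw [he]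
      exact pow_le_pow_left₀ (Real.rpow_nonneg (by linarith) _) hu_ge 2
    refine (measure_mono hsub).trans ?_
    refine (meas_ge_le_lintegral_div ?_
      (ENNReal.ofReal_pos.mpr hTpos).ne' ENNReal.ofReal_ne_top).trans ?_
    · exact ((hmeas k).pow_const 2).ennreal_ofReal.aemeasurable
    · exact ENNReal.div_le_div_right (hL2bd k) _
  -- the corresponding thresholds blow up
  have hLtop : ∀ δ : ℝ, 0 < δ → δ < 1 →
      Tendsto (fun k => ((2 - γ k) ^ 2 / 16) * (1 - δ) ^ (-(γ k) / α k)) atTop atTop :=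
    fun δ h0 h1 => aux_L_tendsto h0 h1 hγ (fun k => rfl) hαlim
  have hTtop : ∀ δ : ℝ, 0 < δ →
      Tendsto (fun k => (1 + δ) ^ ((2:ℝ) / α k)) atTop atTop := by
    intro δ hδ
    have hr : (1:ℝ) < (1 + δ) ^ 2 := by nlinarith
    have h := (aux_rpow_inv hr).comp hαlim
    refine h.congr fun k => ?_
    simp only [Function.comp_apply]
    rw [← Real.rpow_natCast (1 + δ) 2, ← Real.rpow_mul (by linarith : (0:ℝ) ≤ 1 + δ)]
    congr 1
    push_cast
    ring
  have hT1top : ∀ δ : ℝ, 0 < δ →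
      Tendsto (fun k => (1 + δ) ^ ((1:ℝ) / α k)) atTop atTop := by
    intro δ hδ
    have h := (aux_rpow_inv (by linarith : (1:ℝ) < 1 + δ)).comp hαlim
    exact h.congr fun k => rfl
  -- Step B : the limit takes only values 0 and 1 a.e.
  have hg01 : ∀ᵐ x ∂μ, g x = 0 ∨ g x = 1 := by
    have key : ∀ ε : ℝ, 0 < ε → ε < 1 →
        μ {x | ¬(|g x| ≤ ε ∨ |g x - 1| ≤ ε)} = 0 := by
      intro ε hε0 hε1
      have hε2 : 0 < ε / 2 := by linarith
      have hsub : ∀ k, {x | ¬(|g x| ≤ ε ∨ |g x - 1| ≤ ε)} ⊆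
          {x | ε / 2 ≤ |v k x - g x|} ∪
            ({x | 0 < u k x ∧ v k x ≤ 1 - ε / 2} ∪ {x | 1 + ε / 2 ≤ v k x}) := by
        intro k x hx
        simp only [mem_setOf_eq, not_or, not_le] at hx
        obtain ⟨hx0, hx1⟩ := hx
        by_cases hclose' : ε / 2 ≤ |v k x - g x|
        · exact Or.inl hclose'
        push_neg at hclose'
        rw [abs_lt] at hclose'
        right
        have hvx0 : 0 ≤ v k x := hv0 k x
        have hgpos : ε < g x := by
          rcases lt_abs.mp hx0 with h | h
          · exact h
          · exfalso; linarith [hclose'.2]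
        have hupos : 0 < u k x := by
          rcases (hu0 k x).lt_or_eq with h | h
          · exact h
          · exfalso
            have := hv_zero k x h.symm
            linarith [hclose'.1]
        rcases lt_abs.mp hx1 with h | h
        · exact Or.inr (by simp only [mem_setOf_eq]; linarith [hclose'.2])
        · exact Or.inl ⟨hupos, by linarith [hclose'.1]⟩
      have hbd : ∀ k, μ {x | ¬(|g x| ≤ ε ∨ |g x - 1| ≤ ε)} ≤
          μ {x | ε / 2 ≤ |v k x - g x|} +
            (μ {x | 0 < u k x ∧ v k x ≤ 1 - ε / 2} + μ {x | 1 + ε / 2 ≤ v k x}) := by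
        intro k
        refine (measure_mono (hsub k)).trans ?_
        exact (measure_union_le _ _).trans (by gcongr; exact measure_union_le _ _)
      have ha := hclose (ε / 2) hε2
      have hbmid : Tendsto (fun k => μ {x | 0 < u k x ∧ v k x ≤ 1 - ε / 2}) atTop (𝓝 0) := by
        refine tendsto_of_tendsto_of_tendsto_of_le_of_le tendsto_const_nhds
          (aux_ofReal_div_tendsto_zero (hLtop (ε / 2) hε2 (by linarith)))
          (fun k => zero_le) (hmidbd (ε / 2) hε2 (by linarith))
      have hbtop : Tendsto (fun k => μ {x | 1 + ε / 2 ≤ v k x}) atTop (𝓝 0) := by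
        refine tendsto_of_tendsto_of_tendsto_of_le_of_le tendsto_const_nhds
          (aux_ofReal_div_tendsto_zero (hTtop (ε / 2) hε2))
          (fun k => zero_le) (htopbd (ε / 2) hε2)
      have hsum : Tendsto (fun k => μ {x | ε / 2 ≤ |v k x - g x|} +
          (μ {x | 0 < u k x ∧ v k x ≤ 1 - ε / 2} + μ {x | 1 + ε / 2 ≤ v k x}))
          atTop (𝓝 0) := by
        have := ha.add (hbmid.add hbtop)
        simpa using this
      have hle : μ {x | ¬(|g x| ≤ ε ∨ |g x - 1| ≤ ε)} ≤ 0 :=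
        ge_of_tendsto hsum (Eventually.of_forall hbd)
      exact le_antisymm hle zero_le
    have hae : ∀ᵐ x ∂μ, ∀ m : ℕ, |g x| ≤ 1 / (m + 2 : ℝ) ∨ |g x - 1| ≤ 1 / (m + 2 : ℝ) := by
      rw [ae_all_iff]
      intro m
      have hm2 : (0:ℝ) < 1 / (m + 2 : ℝ) := by positivity
      have hm2' : 1 / (m + 2 : ℝ) < 1 := by
        rw [div_lt_one (by positivity)]
        have : (0:ℝ) ≤ m := Nat.cast_nonneg m
        linarith
      have := key (1 / (m + 2 : ℝ)) hm2 hm2'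
      rw [ae_iff]
      convert this using 2
    filter_upwards [hae] with x hx
    by_contra hcon
    push_neg at hcon
    obtain ⟨h0, h1⟩ := hcon
    have hpos : 0 < min |g x| |g x - 1| := by
      apply lt_min
      · exact abs_pos.mpr h0
      · exact abs_pos.mpr (sub_ne_zero.mpr h1)
    obtain ⟨m, hm⟩ := exists_nat_one_div_lt hpos
    have hle : 1 / (m + 2 : ℝ) ≤ 1 / (m + 1 : ℝ) := by
      apply one_div_le_one_div_of_le
      · positivity
      · linarith
    rcases hx m with h | h
    · have := lt_min_iff.mp hm
      linarith [this.1]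
    · have := lt_min_iff.mp hm
      linarith [this.2]
  -- construct the set A
  have hgsm : AEStronglyMeasurable g μ := hg.1
  set G : EuclideanSpace ℝ (Fin n) → ℝ := hgsm.mk g with hGdef
  have hGmeas : StronglyMeasurable G := hgsm.stronglyMeasurable_mk
  set A : Set (EuclideanSpace ℝ (Fin n)) := Ω ∩ {x | G x = 1} with hAdef
  have hAmeas : MeasurableSet A :=
    hΩm.inter (hGmeas.measurable (measurableSet_singleton (1:ℝ)))
  have hgA : ∀ᵐ x ∂μ, g x = A.indicator (fun _ => (1:ℝ)) x := by
    filter_upwards [hg01, hgsm.ae_eq_mk, ae_restrict_mem hΩm] with x h01 hmk hxΩ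
    rcases h01 with h0 | h1
    · have hxA : x ∉ A := by
        rintro ⟨-, hx1⟩
        have hGx : G x = 1 := hx1
        rw [hGdef, ← hmk, h0] at hGx
        norm_num at hGx
      rw [indicator_of_notMem hxA, h0]
    · have hxA : x ∈ A := ⟨hxΩ, show G x = 1 by rw [hGdef, ← hmk]; exact h1⟩
      rw [indicator_of_mem hxA]
      exact h1
  -- Step C : L¹ convergence of the indicators of the positivity sets to χ_A
  have hχv : Tendsto (fun k =>
      ∫⁻ x, ENNReal.ofReal |{y | 0 < u k y}.indicator (fun _ => (1:ℝ)) x - v k x| ∂μ)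
      atTop (𝓝 0) := by
    apply aux_tendsto_zero_of_bound hμfin
    intro δ hδ0 hδ1
    refine ⟨fun k => ENNReal.ofReal M /
        ENNReal.ofReal (((2 - γ k) ^ 2 / 16) * (1 - δ) ^ (-(γ k) / α k)),
      fun k => ENNReal.ofReal M / ENNReal.ofReal ((1 + δ) ^ ((1:ℝ) / α k)),
      aux_ofReal_div_tendsto_zero (hLtop δ hδ0 hδ1),
      aux_ofReal_div_tendsto_zero (hT1top δ hδ0), ?_⟩
    intro k
    set T := (1 + δ) ^ ((1:ℝ) / α k) with hTdef
    have hT1 : (1:ℝ) ≤ T := by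
      rw [hTdef]
      exact Real.one_le_rpow (by linarith) (one_div_pos.mpr (hα0 k)).le
    have hTpos : (0:ℝ) < T := lt_of_lt_of_le one_pos hT1
    have hD : MeasurableSet {x | 0 < u k x ∧ v k x ≤ 1 - δ} :=
      (measurableSet_lt measurable_const (hmeas k)).inter
        (measurableSet_le (hvmeas k) measurable_const)
    have hpt : ∀ x, ENNReal.ofReal |{y | 0 < u k y}.indicator (fun _ => (1:ℝ)) x - v k x| ≤
        {x | 0 < u k x ∧ v k x ≤ 1 - δ}.indicator (fun _ => (1:ℝ≥0∞)) x +
          ENNReal.ofReal δ +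
          ENNReal.ofReal ((u k x) ^ 2) * (ENNReal.ofReal T)⁻¹ := by
      intro x
      by_cases hu : 0 < u k x
      · have hxmem : x ∈ {y | 0 < u k y} := hu
        have hind : {y | 0 < u k y}.indicator (fun _ => (1:ℝ)) x = 1 :=
          indicator_of_mem hxmem _
        rw [hind]
        by_cases h1 : v k x ≤ 1 - δ
        · have hxD : x ∈ {x | 0 < u k x ∧ v k x ≤ 1 - δ} := ⟨hu, h1⟩
          have habs : |1 - v k x| ≤ 1 := by
            rw [abs_le]
            constructor
            · linarith
            · linarith [hv0 k x]
          refine le_add_right (le_add_right ?_)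
          calc ENNReal.ofReal |1 - v k x| ≤ ENNReal.ofReal 1 :=
                ENNReal.ofReal_le_ofReal habs
            _ = {x | 0 < u k x ∧ v k x ≤ 1 - δ}.indicator (fun _ => (1:ℝ≥0∞)) x := by
                rw [indicator_of_mem hxD]; simp
        · push_neg at h1
          by_cases h2 : v k x < 1 + δ
          · have habs : |1 - v k x| ≤ δ := by
              rw [abs_le]
              constructor
              · linarith
              · linarith
            refine le_add_right (le_add_left ?_)
            exact ENNReal.ofReal_le_ofReal habs
          · push_neg at h2
            have huT : T ≤ u k x := by
              have h := Real.rpow_le_rpow (by linarith : (0:ℝ) ≤ 1 + δ) h2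
                (one_div_pos.mpr (hα0 k)).le
              rw [hv_inv] at h
              exact le_trans (le_of_eq hTdef) h
            have hupos : (0:ℝ) < u k x := lt_of_lt_of_le hTpos huT
            have hvle : v k x ≤ (u k x) ^ 2 / T := by
              have e : v k x = (u k x) ^ (2:ℝ) * (u k x) ^ (α k - 2) := by
                rw [← Real.rpow_add hupos]
                show u k x ^ α k = _
                congr 1
                ring
              calc v k x = (u k x) ^ (2:ℝ) * (u k x) ^ (α k - 2) := e
                _ ≤ (u k x) ^ (2:ℝ) * T⁻¹ := by
                    refine mul_le_mul_of_nonneg_left ?_ (Real.rpow_nonneg (hu0 k x) _)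
                    calc (u k x) ^ (α k - 2) ≤ T ^ (α k - 2) :=
                          Real.rpow_le_rpow_of_nonpos hTpos huT (by linarith [hα1 k])
                      _ ≤ T ^ (-1:ℝ) :=
                          Real.rpow_le_rpow_of_exponent_le hT1 (by linarith [hα1 k])
                      _ = T⁻¹ := Real.rpow_neg_one T
                _ = (u k x) ^ 2 / T := by
                    rw [Real.rpow_two, div_eq_mul_inv]
            have habs : |1 - v k x| ≤ (u k x) ^ 2 / T := by
              rw [abs_of_nonpos (by linarith : 1 - v k x ≤ 0)]
              have hv1 : (0:ℝ) ≤ v k x := hv0 k x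
              linarith
            refine le_add_left ?_
            calc ENNReal.ofReal |1 - v k x| ≤ ENNReal.ofReal ((u k x) ^ 2 / T) :=
                  ENNReal.ofReal_le_ofReal habs
              _ = ENNReal.ofReal ((u k x) ^ 2) * (ENNReal.ofReal T)⁻¹ := by
                  rw [ENNReal.ofReal_div_of_pos hTpos, ENNReal.div_eq_inv_mul, mul_comm]
      · have hu0' : u k x = 0 := le_antisymm (not_lt.mp hu) (hu0 k x)
        have hxmem : x ∉ {y | 0 < u k y} := hu
        have hind : {y | 0 < u k y}.indicator (fun _ => (1:ℝ)) x = 0 :=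
          indicator_of_notMem hxmem _
        rw [hind, hv_zero k x hu0']
        simp
    calc ∫⁻ x, ENNReal.ofReal |{y | 0 < u k y}.indicator (fun _ => (1:ℝ)) x - v k x| ∂μ
        ≤ ∫⁻ x, ({x | 0 < u k x ∧ v k x ≤ 1 - δ}.indicator (fun _ => (1:ℝ≥0∞)) x +
            ENNReal.ofReal δ +
            ENNReal.ofReal ((u k x) ^ 2) * (ENNReal.ofReal T)⁻¹) ∂μ := lintegral_mono hpt
      _ = μ {x | 0 < u k x ∧ v k x ≤ 1 - δ} + ENNReal.ofReal δ * μ univ +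
            (∫⁻ x, ENNReal.ofReal ((u k x) ^ 2) ∂μ) * (ENNReal.ofReal T)⁻¹ := by
          rw [lintegral_add_left (f := fun x => {x | 0 < u k x ∧ v k x ≤ 1 - δ}.indicator (fun _ => (1:ℝ≥0∞)) x +
              ENNReal.ofReal δ) ((measurable_const.indicator hD).add measurable_const),
            lintegral_add_left (measurable_const.indicator hD),
            lintegral_indicator_const hD, lintegral_const, one_mul,
            lintegral_mul_const _ ((hmeas k).pow_const 2).ennreal_ofReal]
      _ ≤ ENNReal.ofReal M /
            ENNReal.ofReal (((2 - γ k) ^ 2 / 16) * (1 - δ) ^ (-(γ k) / α k)) +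
            ENNReal.ofReal δ * μ univ +
            ENNReal.ofReal M / ENNReal.ofReal T := by
          gcongr
          · exact hmidbd δ hδ0 hδ1 k
          · rw [div_eq_mul_inv]
            exact mul_le_mul_left (hL2bd k) _
  -- assemble everything
  refine ⟨A, hAmeas, inter_subset_left, hgA, ?_⟩
  have hχmeas : ∀ k, AEStronglyMeasurable
      ({y | 0 < u k y}.indicator (fun _ => (1:ℝ))) μ := fun k =>
    (measurable_const.indicator (measurableSet_lt measurable_const (hmeas k))).aestronglyMeasurable
  have hvsm : ∀ k, AEStronglyMeasurable (v k) μ := fun k => (hvmeas k).aestronglyMeasurable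
  have hAsm : AEStronglyMeasurable (A.indicator (fun _ => (1:ℝ))) μ :=
    (measurable_const.indicator hAmeas).aestronglyMeasurable
  have hL1v : Tendsto (fun k => eLpNorm (fun x => v k x - g x) 1 μ) atTop (𝓝 0) := hL1
  have htri : ∀ k, eLpNorm (fun x => {y | 0 < u k y}.indicator (fun _ => (1:ℝ)) x -
      A.indicator (fun _ => (1:ℝ)) x) 1 μ ≤
      (∫⁻ x, ENNReal.ofReal |{y | 0 < u k y}.indicator (fun _ => (1:ℝ)) x - v k x| ∂μ) +
        eLpNorm (fun x => v k x - g x) 1 μ := by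
    intro k
    have hdecomp : (fun x => {y | 0 < u k y}.indicator (fun _ => (1:ℝ)) x -
        A.indicator (fun _ => (1:ℝ)) x) =
        (fun x => ({y | 0 < u k y}.indicator (fun _ => (1:ℝ)) x - v k x) +
          (v k x - A.indicator (fun _ => (1:ℝ)) x)) := by
      funext x; ring
    rw [hdecomp]
    refine (eLpNorm_add_le ((hχmeas k).sub (hvsm k)) ((hvsm k).sub hAsm) le_rfl).trans ?_
    have e1 : eLpNorm (fun x => {y | 0 < u k y}.indicator (fun _ => (1:ℝ)) x - v k x) 1 μ =
        ∫⁻ x, ENNReal.ofReal |{y | 0 < u k y}.indicator (fun _ => (1:ℝ)) x - v k x| ∂μ := by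
      rw [eLpNorm_one_eq_lintegral_enorm]
      exact lintegral_congr fun x => Real.enorm_eq_ofReal_abs _
    have e2 : eLpNorm (fun x => v k x - A.indicator (fun _ => (1:ℝ)) x) 1 μ =
        eLpNorm (fun x => v k x - g x) 1 μ := by
      apply eLpNorm_congr_ae
      filter_upwards [hgA] with x hx
      rw [hx]
    exact add_le_add e1.le e2.le
  have hsum : Tendsto (fun k =>
      (∫⁻ x, ENNReal.ofReal |{y | 0 < u k y}.indicator (fun _ => (1:ℝ)) x - v k x| ∂μ) +
        eLpNorm (fun x => v k x - g x) 1 μ) atTop (𝓝 0) := by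
    simpa using hχv.add hL1v
  exact tendsto_of_tendsto_of_tendsto_of_le_of_le tendsto_const_nhds hsum
    (fun k => zero_le) htri
end
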